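/- arXiv:1305.1331 — 6 statements merged into one kernel-verified Lean document; each statement's English description precedes it below -/
import Mathlib

section
/- Let G be a connected graph on at least n vertices such that every pair of adjacent vertices is joined by at least m parallel edges, and let H be a graph with n vertices and m edges. Then G contains H as an immersion. -/
/-- A finite multigraph without loops: a vertex type, an edge type, and an
endpoint map assigning to each edge an unordered pair of distinct vertices. -/
structure Multigraph where
  V : Type
  E : Type
  [finV : Finite V]
  [finE : Finite E]
  ends : E → Sym2 V
  no_loops : ∀ e, ¬ (ends e).IsDiag

attribute [instance] Multigraph.finV Multigraph.finE

namespace Multigraph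

variable (G : Multigraph)

/-- The set of edges with exactly one endpoint in `X`. -/
def edgeBoundary (X : Set G.V) : Set G.E :=
  {e | ∃ u v, G.ends e = s(u, v) ∧ u ∈ X ∧ v ∉ X}

/-- The degree of a vertex: the number of edges incident with it. -/
noncomputable def degree (v : G.V) : ℕ := {e | v ∈ G.ends e}.ncard

/-- Two vertices are adjacent if some edge joins them. -/
def Adj (u v : G.V) : Prop := ∃ e, G.ends e = s(u, v)

/-- Walks in a multigraph. -/
inductive Walk : G.V → G.V → Type
  | nil (v : G.V) : Walk v v
  | cons {u v w : G.V} (e : G.E) (h : G.ends e = s(u, v)) (p : Walk v w) : Walk u w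

variable {G}

/-- The list of edges of a walk. -/
def Walk.edges : ∀ {u v : G.V}, G.Walk u v → List G.E
  | _, _, .nil _ => []
  | _, _, .cons e _ p => e :: p.edges

/-- The list of vertices of a walk, from the first to the last. -/
def Walk.support : ∀ {u v : G.V}, G.Walk u v → List G.V
  | _, v, .nil _ => [v]
  | u, _, .cons _ _ p => u :: p.support

/-- A walk is a path if it repeats no vertex. -/
def Walk.IsPath {u v : G.V} (p : G.Walk u v) : Prop := p.support.Nodup

/-- The internal vertices of a walk (all vertices except the two endpoints). -/
def Walk.internals {u v : G.V} (p : G.Walk u v) : List G.V := p.support.tail.dropLast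

/-- The walk avoids the edge set `F`. -/
def Walk.avoids {u v : G.V} (p : G.Walk u v) (F : Set G.E) : Prop := ∀ e ∈ p.edges, e ∉ F

variable (G)

/-- Any two vertices can be joined by a walk avoiding the edge set `F`. -/
def ConnectedAvoiding (F : Set G.E) : Prop :=
  ∀ u v : G.V, ∃ p : G.Walk u v, p.avoids F

/-- A multigraph is connected if any two vertices are joined by a walk. -/
def Connected : Prop := G.ConnectedAvoiding ∅

/-- A multigraph is `k`-edge-connected if it has at least two vertices and
deleting any fewer than `k` edges leaves it connected. -/
def EdgeConnected (k : ℕ) : Prop :=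
  Nontrivial G.V ∧ ∀ F : Set G.E, F.ncard < k → G.ConnectedAvoiding F

end Multigraph

open Multigraph

/-- The data of a (weak) immersion of `H` in `G`: an injection of the vertices and
pairwise edge-disjoint composite paths, one for each edge of `H`. -/
structure ImmersionData (H G : Multigraph) where
  π : H.V → G.V
  inj : Function.Injective π
  pathEnds : H.E → G.V × G.V
  path : ∀ f : H.E, G.Walk (pathEnds f).1 (pathEnds f).2
  ends_eq : ∀ f : H.E, Sym2.map π (H.ends f) = s((pathEnds f).1, (pathEnds f).2)
  isPath : ∀ f, (path f).IsPath
  edge_disj : ∀ f f', f ≠ f' → ∀ e, e ∈ (path f).edges → e ∉ (path f').edges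

/-- `G` contains `H` as a (weak) immersion. -/
def Immersion (H G : Multigraph) : Prop := Nonempty (ImmersionData H G)

/-- An immersion is strong if no branch vertex is an internal vertex of a composite path. -/
def ImmersionData.Strong {H G : Multigraph} (I : ImmersionData H G) : Prop :=
  ∀ f : H.E, ∀ v : H.V, I.π v ∉ (I.path f).internals

/-- `G` contains `H` as a strong immersion. -/
def StrongImmersion (H G : Multigraph) : Prop := ∃ I : ImmersionData H G, I.Strong

/-- `G` contains `H` as a topological minor: an immersion whose composite paths are
internally vertex-disjoint and avoid the branch vertices internally. -/
def TopologicalMinor (H G : Multigraph) : Prop :=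
  ∃ I : ImmersionData H G,
    (∀ f v, I.π v ∉ (I.path f).internals) ∧
    (∀ f f', f ≠ f' → ∀ w, w ∈ (I.path f).internals → w ∉ (I.path f').internals)

/-- The complete multigraph `K t`: one edge for every unordered pair of distinct vertices. -/
def cliqueGraph (t : ℕ) : Multigraph where
  V := Fin t
  E := {p : Sym2 (Fin t) // ¬ p.IsDiag}
  ends := Subtype.val
  no_loops := fun e => e.2

/-- The multigraph `S_{k,n}`: vertices `x_1, …, x_n` (`some i`) and `y` (`none`), with
exactly `k` parallel edges between each `x_i` and `y`. -/
def starMulti (k n : ℕ) : Multigraph where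
  V := Option (Fin n)
  E := Fin n × Fin k
  ends := fun p => s(some p.1, none)
  no_loops := fun e h => by simp [Sym2.mk_isDiag_iff] at h

/-- The multigraph `P_{k,n}`: a path on `n` vertices with each edge replaced by `k`
parallel edges. -/
def pathMulti (k n : ℕ) : Multigraph where
  V := Fin n
  E := Fin (n - 1) × Fin k
  ends := fun p => s(⟨p.1.1, by have := p.1.2; omega⟩, ⟨p.1.1 + 1, by have := p.1.2; omega⟩)
  no_loops := fun e h => by simp [Sym2.mk_isDiag_iff, Fin.ext_iff] at h

namespace Multigraph

/-- A subgraph of a multigraph, given by a set of vertices and a set of edges with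
both endpoints among those vertices. -/
structure Sub (G : Multigraph) where
  verts : Set G.V
  edgeSet : Set G.E
  closed : ∀ e ∈ edgeSet, ∀ v ∈ G.ends e, v ∈ verts

/-- `(A, B)` is a separation: `A` and `B` are edge-disjoint subgraphs whose union is `G`. -/
def IsSeparation {G : Multigraph} (A B : G.Sub) : Prop :=
  A.verts ∪ B.verts = Set.univ ∧ A.edgeSet ∪ B.edgeSet = Set.univ ∧ A.edgeSet ∩ B.edgeSet = ∅

/-- The order of a separation `(A, B)`. -/
noncomputable def sepOrder {G : Multigraph} (A B : G.Sub) : ℕ := (A.verts ∩ B.verts).ncard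

/-- `𝒯` is a tangle of order `Θ` in `G`. -/
def IsTangle (G : Multigraph) (𝒯 : Set (G.Sub × G.Sub)) (Θ : ℕ) : Prop :=
  (∀ p ∈ 𝒯, IsSeparation p.1 p.2 ∧ sepOrder p.1 p.2 < Θ) ∧
  (∀ A B : G.Sub, IsSeparation A B → sepOrder A B < Θ → (A, B) ∈ 𝒯 ∨ (B, A) ∈ 𝒯) ∧
  (∀ p₁ ∈ 𝒯, ∀ p₂ ∈ 𝒯, ∀ p₃ ∈ 𝒯,
    ¬ (p₁.1.verts ∪ p₂.1.verts ∪ p₃.1.verts = Set.univ ∧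
       p₁.1.edgeSet ∪ p₂.1.edgeSet ∪ p₃.1.edgeSet = Set.univ)) ∧
  (∀ p ∈ 𝒯, p.1.verts ≠ Set.univ)

/-- The line graph of a multigraph: vertices are the edges of `G`, with an edge of the
line graph for each unordered pair of distinct edges of `G` sharing an endpoint. -/
def lineGraph (G : Multigraph) : Multigraph where
  V := G.E
  E := {p : Sym2 G.E // ¬ p.IsDiag ∧ ∃ e f, p = s(e, f) ∧ ∃ v, v ∈ G.ends e ∧ v ∈ G.ends f}
  ends := Subtype.val
  no_loops := fun e => e.2.1

/-- `G'` (with projection `q` and new vertex `x`) is obtained from `G` by consolidating the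
vertex set `X`: delete all edges with both ends in `X` and identify `X` to the vertex `x`. -/
def IsConsolidation (G : Multigraph) (X : Set G.V) (G' : Multigraph)
    (q : G.V → G'.V) (x : G'.V) : Prop :=
  Function.Surjective q ∧ (∀ a ∈ X, q a = x) ∧ (∀ a ∉ X, q a ≠ x) ∧
  (∀ a b, a ∉ X → b ∉ X → q a = q b → a = b) ∧
  ∃ φ : {e : G.E // ∃ w ∈ G.ends e, w ∉ X} ≃ G'.E,
    ∀ e, G'.ends (φ e) = Sym2.map q (G.ends e.1)

/-- An `X`-spider of order `k` with body `v`: `k` pairwise edge-disjoint paths from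
`v ∉ X` to `X`, none of them having an internal vertex in `X`. -/
def HasSpiderWithBody (G : Multigraph) (X : Set G.V) (k : ℕ) (v : G.V) : Prop :=
  v ∉ X ∧ ∃ (tgt : Fin k → G.V) (P : ∀ i, G.Walk v (tgt i)),
    (∀ i, tgt i ∈ X) ∧ (∀ i, (P i).IsPath) ∧
    (∀ i, ∀ w ∈ (P i).internals, w ∉ X) ∧
    (∀ i j, i ≠ j → ∀ e ∈ (P i).edges, e ∉ (P j).edges)

/-- `G` contains an `X`-spider of order `k`. -/
def HasXSpider (G : Multigraph) (X : Set G.V) (k : ℕ) : Prop :=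
  ∃ v, HasSpiderWithBody G X k v

/-- A model of the complete graph `K t` in `G`: `t` pairwise disjoint nonempty connected
branch sets with an edge of `G` between any two of them. -/
def IsCliqueModel (G : Multigraph) (t : ℕ) (X : Fin t → Set G.V) : Prop :=
  (∀ i, (X i).Nonempty) ∧
  (∀ i j, i ≠ j → Disjoint (X i) (X j)) ∧
  (∀ i, ∀ u ∈ X i, ∀ v ∈ X i, ∃ p : G.Walk u v, ∀ w ∈ p.support, w ∈ X i) ∧
  (∀ i j, i ≠ j → ∃ e, ∃ a ∈ X i, ∃ b ∈ X j, G.ends e = s(a, b))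

/-- The canonical separation `(A, B)` of the line graph of `G` associated to a vertex
set `U ⊆ V(G)`. -/
def IsCanonicalSeparation (G : Multigraph) (U : Set G.V) (A B : G.lineGraph.Sub) : Prop :=
  A.verts = {e : G.E | ∃ w ∈ G.ends e, w ∈ U} ∧
  A.edgeSet = {p : G.lineGraph.E | ∀ q ∈ G.lineGraph.ends p, ∃ w ∈ G.ends q, w ∈ U} ∧
  B.verts = {e : G.E | ∃ w ∈ G.ends e, w ∉ U} ∧
  B.edgeSet = {p : G.lineGraph.E | (∀ q ∈ G.lineGraph.ends p, ∃ w ∈ G.ends q, w ∉ U) ∧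
    ¬ (∀ q ∈ G.lineGraph.ends p, q ∈ G.edgeBoundary U)}

/-- A `k`-star with center `u`: a set of `k` edges all incident with `u`. -/
def IsKStarWithCenter (G : Multigraph) (F : Set G.E) (k : ℕ) (u : G.V) : Prop :=
  F.ncard = k ∧ ∀ e ∈ F, u ∈ G.ends e

/-- A set `F` of vertices of the line graph of `G` is free with respect to a tangle `𝒯`
in the line graph if no separation in `𝒯` of order less than `|F|` has `F` on its small side. -/
def FreeInTangle (G : Multigraph) (𝒯 : Set (G.lineGraph.Sub × G.lineGraph.Sub))
    (F : Set G.E) : Prop :=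
  ¬ ∃ p ∈ 𝒯, sepOrder p.1 p.2 < F.ncard ∧ F ⊆ p.1.verts

end Multigraph


namespace Multigraph

variable {G : Multigraph}

/-- From a path, extract a path from any vertex on its support to the end. -/
lemma Walk.exists_path_of_mem :
    ∀ {v w : G.V} (q : G.Walk v w), q.IsPath → ∀ u, u ∈ q.support →
      ∃ r : G.Walk u w, r.IsPath ∧ ∀ x ∈ r.support, x ∈ q.support := by
  intro v w q
  induction q with
  | nil v =>
    intro _ u hu
    simp only [Walk.support, List.mem_singleton] at hu
    subst hu
    exact ⟨.nil u, by simp [Walk.IsPath, Walk.support], by simp⟩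
  | cons e he p ih =>
    intro hq u hu
    simp only [Walk.support, List.mem_cons] at hu
    have hptail : p.IsPath := by
      simpa [Walk.IsPath, Walk.support, List.nodup_cons] using hq.of_cons
    by_cases h : u ∈ p.support
    · obtain ⟨r, hr, hsub⟩ := ih hptail u h
      exact ⟨r, hr, fun x hx => by
        simp only [Walk.support, List.mem_cons]; exact Or.inr (hsub x hx)⟩
    · have hu' : u = _ := hu.resolve_right h
      subst hu'
      exact ⟨.cons e he p, hq, fun x hx => hx⟩

/-- Every walk can be replaced by a path with the same endpoints. -/
lemma Walk.exists_isPath : ∀ {u v : G.V} (p : G.Walk u v),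
    ∃ q : G.Walk u v, q.IsPath := by
  intro u v p
  induction p with
  | nil v => exact ⟨.nil v, by simp [Walk.IsPath, Walk.support]⟩
  | cons e he p ih =>
    rename_i a b c
    obtain ⟨q, hq⟩ := ih
    by_cases h : a ∈ q.support
    · obtain ⟨r, hr, -⟩ := Walk.exists_path_of_mem q hq a h
      exact ⟨r, hr⟩
    · exact ⟨.cons e he q, by
        simpa [Walk.IsPath, Walk.support, List.nodup_cons] using ⟨h, hq⟩⟩

end Multigraph

/-- a connected graph on at least `n` vertices in which every pair of
adjacent vertices is joined by at least `m` parallel edges contains every graph with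
`n` vertices and `m` edges as an immersion. -/
theorem immersion_of_connected_parallel (G H : Multigraph) (n m : ℕ)
    (hHn : Nat.card H.V = n) (hHm : Nat.card H.E = m)
    (hconn : G.Connected) (hGn : n ≤ Nat.card G.V)
    (hpar : ∀ u v : G.V, G.Adj u v → m ≤ ({e | G.ends e = s(u, v)} : Set G.E).ncard) :
    Immersion H G := by
  classical
  -- an injection of the vertices
  have eH : H.V ≃ Fin n := hHn ▸ Finite.equivFin H.V
  have eG : G.V ≃ Fin (Nat.card G.V) := Finite.equivFin G.V
  set π : H.V → G.V := fun x => eG.symm (Fin.castLE hGn (eH x)) with hπ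
  have hπinj : Function.Injective π := by
    intro x y hxy
    exact eH.injective (Fin.castLE_injective hGn (eG.symm.injective hxy))
  -- an injection of the edges into `Fin m`
  have eE : H.E ≃ Fin m := hHm ▸ Finite.equivFin H.E
  set ι : H.E → Fin m := fun f => eE f with hι
  have hιinj : Function.Injective ι := eE.injective
  -- choose `m` distinct parallel edges for each realized pair
  have sym2rep : ∀ z : Sym2 G.V, ∃ ab : G.V × G.V, z = s(ab.1, ab.2) := fun z =>
    Sym2.ind (f := fun z => ∃ ab : G.V × G.V, z = s(ab.1, ab.2))
      (fun x y => ⟨(x, y), rfl⟩) z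
  have key : ∀ p : Sym2 G.V, (∃ e, G.ends e = p) →
      ∃ σ : Fin m → G.E, Function.Injective σ ∧ ∀ i, G.ends (σ i) = p := by
    rintro p ⟨e, rfl⟩
    obtain ⟨⟨u, v⟩, huv⟩ := sym2rep (G.ends e)
    have hadj : G.Adj u v := ⟨e, huv⟩
    have hm : m ≤ ({e' | G.ends e' = s(u, v)} : Set G.E).ncard := hpar u v hadj
    obtain ⟨t, hts, htcard⟩ := Set.exists_subset_card_eq hm
    have htfin : Nat.card t = m := by
      rw [Nat.card_coe_set_eq, htcard]
    have eqv : t ≃ Fin m := Finite.equivFinOfCardEq htfin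
    refine ⟨fun i => (eqv.symm i : G.E), ?_, ?_⟩
    · intro i j hij
      exact eqv.symm.injective (Subtype.val_injective hij)
    · intro i
      have := hts (eqv.symm i).2
      rw [huv]
      exact this
  choose F hFinj hFend using key
  have hFcongr : ∀ (p q : Sym2 G.V) (h1 : ∃ e, G.ends e = p) (h2 : ∃ e, G.ends e = q),
      p = q → ∀ i, F p h1 i = F q h2 i := by
    rintro p q h1 h2 rfl i; rfl
  -- recoloring a walk with color `i`
  have recolor : ∀ {a b : G.V} (p : G.Walk a b) (i : Fin m),
      ∃ q : G.Walk a b, q.support = p.support ∧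
        ∀ e ∈ q.edges, e = F (G.ends e) ⟨e, rfl⟩ i := by
    intro a b p i
    induction p with
    | nil v => exact ⟨.nil v, rfl, by simp [Walk.edges]⟩
    | cons e he p ih =>
      obtain ⟨q, hsup, hedge⟩ := ih
      refine ⟨.cons (F (G.ends e) ⟨e, rfl⟩ i) (by rw [hFend, he]) q, ?_, ?_⟩
      · simp [Walk.support, hsup]
      · intro e' he'
        simp only [Walk.edges, List.mem_cons] at he'
        rcases he' with rfl | h
        · exact (hFcongr _ _ ⟨_, rfl⟩ ⟨e, rfl⟩ (hFend _ _ i) i).symm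
        · exact hedge e' h
  -- colored paths between any two vertices
  have getPath : ∀ (a b : G.V) (i : Fin m), ∃ q : G.Walk a b, q.IsPath ∧
      ∀ e ∈ q.edges, e = F (G.ends e) ⟨e, rfl⟩ i := by
    intro a b i
    obtain ⟨w0, -⟩ := hconn a b
    obtain ⟨p, hp⟩ := Walk.exists_isPath w0
    obtain ⟨q, hsup, hedge⟩ := recolor p i
    exact ⟨q, by rwa [Walk.IsPath, hsup], hedge⟩
  -- endpoints of the image pairs
  have rep : ∀ f : H.E, ∃ ab : G.V × G.V, Sym2.map π (H.ends f) = s(ab.1, ab.2) :=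
    fun f => sym2rep _
  choose pe hpe using rep
  choose pathF hpath hedges using fun f => getPath (pe f).1 (pe f).2 (ι f)
  refine ⟨⟨π, hπinj, pe, pathF, hpe, hpath, ?_⟩⟩
  intro f f' hff e hef hef'
  have h1 := hedges f e hef
  have h2 := hedges f' e hef'
  have : ι f = ι f' := hFinj (G.ends e) ⟨e, rfl⟩ (h1.symm.trans h2)
  exact hff (hιinj this)
end

section
/- Let G and H be graphs such that G does not contain H as an immersion. Suppose u, v ∈ V(G) are joined by at least |E(H)| parallel edges. Let G' be obtained from G by deleting all edges between u and v and identifying u and v into a single vertex. Then G' does not contain H as an immersion. -/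
open Multigraph

/-!
Fix an injection `f ↦ s_f` of `E(H)` into the parallel `uv`-edges. A path of `G'` lifts to a
path of `G`: replace each edge by its preimage and, wherever two consecutive lifted edges meet
the identified vertex at different ends `u` and `v`, insert `s_f` between them. A path of `G'`
passes through the identified vertex at most once, so the lift is again a path; lifts of
edge-disjoint paths stay edge-disjoint because the `s_f` are distinct and are not preimages of
edges of `G'`. Thus an immersion of `H` in `G'` yields one in `G`.
-/

namespace Multigraph

variable {G G' : Multigraph} {q : G.V → G'.V}

def JoinsFibres (q : G.V → G'.V) (s : G.E) : Prop :=
  ∀ a b, q a = q b → a ≠ b → G.ends s = s(a, b)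

theorem exists_ends_eq_of_map_ends_eq {e : G.E} {a c : G'.V}
    (h : Sym2.map q (G.ends e) = s(a, c)) :
    ∃ a₀ c₀ : G.V, G.ends e = s(a₀, c₀) ∧ q a₀ = a ∧ q c₀ = c := by
  induction he : G.ends e using Sym2.ind with
  | _ x y =>
    rw [he, Sym2.map_mk, Sym2.eq_iff] at h
    rcases h with ⟨hx, hy⟩ | ⟨hy, hx⟩
    · exact ⟨x, y, rfl, hx, hy⟩
    · exact ⟨y, x, Sym2.eq_swap, hx, hy⟩

namespace Walk

variable {s : G.E}

theorem support_eq_cons {a b : G.V} (W : G.Walk a b) : W.support = a :: W.support.tail := by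
  cases W <;> rfl

open Classical in
noncomputable def consFibre (hs : JoinsFibres q s) (a₀ : G.V) {a b : G.V} (h : q a₀ = q a)
    (W : G.Walk a b) : G.Walk a₀ b :=
  if h' : a₀ = a then h' ▸ W else .cons s (hs a₀ a h h') W

section consFibre

variable (hs : JoinsFibres q s) {a₀ a b : G.V} (h : q a₀ = q a) (W : G.Walk a b)

theorem mem_support_consFibre {z : G.V} (hz : z ∈ (W.consFibre hs a₀ h).support) :
    z = a₀ ∨ z ∈ W.support := by
  unfold consFibre at hz
  split_ifs at hz with h'
  · subst h'; exact Or.inr hz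
  · simpa [Walk.support] using hz

theorem mem_edges_consFibre {t : G.E} (ht : t ∈ (W.consFibre hs a₀ h).edges) :
    t = s ∨ t ∈ W.edges := by
  unfold consFibre at ht
  split_ifs at ht with h'
  · subst h'; exact Or.inr ht
  · simpa [Walk.edges] using ht

theorem nodup_support_consFibre (hW : W.support.Nodup) (ha₀ : a₀ ∉ W.support.tail) :
    (W.consFibre hs a₀ h).support.Nodup := by
  unfold consFibre
  split_ifs with h'
  · subst h'; exact hW
  · show (a₀ :: W.support).Nodup
    rw [support_eq_cons W] at hW ⊢
    simp only [List.nodup_cons, List.mem_cons, not_or] at hW ⊢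
    exact ⟨⟨h', ha₀⟩, hW⟩

end consFibre

noncomputable def lift (hs : JoinsFibres q s) (ι : G'.E → G.E)
    (hι : ∀ e', Sym2.map q (G.ends (ι e')) = G'.ends e') :
    ∀ {a b : G'.V} (_ : G'.Walk a b) (a₀ b₀ : G.V), q a₀ = a → q b₀ = b → G.Walk a₀ b₀
  | _, _, .nil _, a₀, b₀, ha, hb => (Walk.nil b₀).consFibre hs a₀ (ha.trans hb.symm)
  | _, _, .cons e' h p, a₀, b₀, ha, hb =>
    have hex := exists_ends_eq_of_map_ends_eq ((hι e').trans h)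
    let c₁ := hex.choose_spec.choose
    have hspec : G.ends (ι e') = s(hex.choose, c₁) ∧ q hex.choose = _ ∧ q c₁ = _ :=
      hex.choose_spec.choose_spec
    (Walk.cons (ι e') hspec.1 (p.lift hs ι hι c₁ b₀ hspec.2.2 hb)).consFibre hs a₀
      (ha.trans hspec.2.1.symm)

section lift

variable (hs : JoinsFibres q s) (ι : G'.E → G.E)
  (hι : ∀ e', Sym2.map q (G.ends (ι e')) = G'.ends e')

theorem lift_cons {a c b : G'.V} (e' : G'.E) (h : G'.ends e' = s(a, c)) (p : G'.Walk c b)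
    {a₀ b₀ : G.V} (ha : q a₀ = a) (hb : q b₀ = b) :
    ∃ (a₁ c₁ : G.V) (hends : G.ends (ι e') = s(a₁, c₁)) (h₁ : q a₁ = a) (h₂ : q c₁ = c),
      (cons e' h p).lift hs ι hι a₀ b₀ ha hb =
        (cons (ι e') hends (p.lift hs ι hι c₁ b₀ h₂ hb)).consFibre hs a₀ (ha.trans h₁.symm) :=
  have hex := exists_ends_eq_of_map_ends_eq ((hι e').trans h)
  ⟨_, _, hex.choose_spec.choose_spec.1, hex.choose_spec.choose_spec.2.1,
    hex.choose_spec.choose_spec.2.2, rfl⟩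

theorem map_mem_support_lift {a b : G'.V} (p : G'.Walk a b) {a₀ b₀ : G.V} (ha : q a₀ = a)
    (hb : q b₀ = b) {z : G.V} (hz : z ∈ (p.lift hs ι hι a₀ b₀ ha hb).support) :
    q z ∈ p.support := by
  induction p generalizing a₀ with
  | nil c =>
    rcases mem_support_consFibre hs _ _ hz with rfl | hz
    · simp [Walk.support, ha]
    · simp only [Walk.support, List.mem_singleton] at hz
      simp [Walk.support, hz, hb]
  | cons e' h p ih =>
    obtain ⟨a₁, _, _, h₁, h₂, hlift⟩ := lift_cons hs ι hι e' h p ha hb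
    rw [hlift] at hz
    rcases mem_support_consFibre hs _ _ hz with rfl | hz
    · simp [Walk.support, ha]
    · simp only [Walk.support, List.mem_cons] at hz ⊢
      rcases hz with rfl | hz
      · exact Or.inl h₁
      · exact Or.inr (ih h₂ hb hz)

theorem mem_edges_lift {a b : G'.V} (p : G'.Walk a b) {a₀ b₀ : G.V} (ha : q a₀ = a)
    (hb : q b₀ = b) {t : G.E} (ht : t ∈ (p.lift hs ι hι a₀ b₀ ha hb).edges) :
    t = s ∨ ∃ e' ∈ p.edges, t = ι e' := by
  induction p generalizing a₀ with
  | nil c =>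
    rcases mem_edges_consFibre hs _ _ ht with rfl | ht
    · exact Or.inl rfl
    · simp [Walk.edges] at ht
  | cons e' h p ih =>
    obtain ⟨_, _, _, _, h₂, hlift⟩ := lift_cons hs ι hι e' h p ha hb
    rw [hlift] at ht
    rcases mem_edges_consFibre hs _ _ ht with rfl | ht
    · exact Or.inl rfl
    · simp only [Walk.edges, List.mem_cons] at ht
      rcases ht with rfl | ht
      · exact Or.inr ⟨e', by simp [Walk.edges], rfl⟩
      · obtain ht | ⟨e'', he'', rfl⟩ := ih h₂ hb ht
        · exact Or.inl ht
        · exact Or.inr ⟨e'', by simp [Walk.edges, he''], rfl⟩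

theorem isPath_lift {a b : G'.V} {p : G'.Walk a b} (hp : p.IsPath) {a₀ b₀ : G.V}
    (ha : q a₀ = a) (hb : q b₀ = b) : (p.lift hs ι hι a₀ b₀ ha hb).IsPath := by
  induction p generalizing a₀ with
  | nil c => exact nodup_support_consFibre hs _ _ (by simp [Walk.support]) (by simp [Walk.support])
  | @cons a c b e' h p ih =>
    obtain ⟨a₁, c₁, _, h₁, h₂, hlift⟩ := lift_cons hs ι hι e' h p ha hb
    have hp' : _ ∉ p.support ∧ p.support.Nodup := List.nodup_cons.mp hp
    have h_not_mem : ∀ z, q z = a → z ∉ (p.lift hs ι hι c₁ b₀ h₂ hb).support :=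
      fun z hz hmem => hp'.1 (hz ▸ map_mem_support_lift hs ι hι p h₂ hb hmem)
    rw [IsPath, hlift]
    exact nodup_support_consFibre hs _ _
      (List.nodup_cons.mpr ⟨h_not_mem a₁ h₁, ih hp'.2 h₂ hb⟩) (h_not_mem a₀ ha)

end lift

end Walk

end Multigraph

open Multigraph

theorem Immersion.of_lift {H G G' : Multigraph} {q : G.V → G'.V} (hq : Function.Surjective q)
    {ι : G'.E → G.E} (hι_inj : Function.Injective ι)
    (hι : ∀ e', Sym2.map q (G.ends (ι e')) = G'.ends e')
    {σ : H.E → G.E} (hσ_inj : Function.Injective σ) (hσι : ∀ f e', σ f ≠ ι e')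
    (hσ : ∀ f, JoinsFibres q (σ f)) (h : Immersion H G') : Immersion H G := by
  obtain ⟨I⟩ := h
  let sec := Function.surjInv hq
  have hsec : ∀ y, q (sec y) = y := Function.surjInv_eq hq
  let path (f : H.E) := (I.path f).lift (hσ f) ι hι _ _ (hsec (I.pathEnds f).1) (hsec _)
  refine ⟨⟨sec ∘ I.π, (Function.injective_surjInv hq).comp I.inj,
    fun f => (sec (I.pathEnds f).1, sec (I.pathEnds f).2), path, fun f => ?_,
    fun f => Walk.isPath_lift _ ι hι (I.isPath f) _ _, fun f f' hne t ht ht' => ?_⟩⟩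
  · rw [← Sym2.map_map, I.ends_eq, Sym2.map_mk]
  · rcases Walk.mem_edges_lift _ ι hι _ _ _ ht with rfl | ⟨e₁, he₁, rfl⟩ <;>
      rcases Walk.mem_edges_lift _ ι hι _ _ _ ht' with h' | ⟨e₂, he₂, h'⟩
    · exact hne (hσ_inj h')
    · exact hσι f e₂ h'
    · exact hσι f' e₁ h'.symm
    · exact I.edge_disj f f' hne e₁ he₁ (hι_inj h' ▸ he₂)

namespace Multigraph.IsConsolidation

variable {G G' : Multigraph} {X : Set G.V} {q : G.V → G'.V} {x : G'.V}

theorem exists_edge_lift (h : IsConsolidation G X G' q x) :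
    ∃ ι : G'.E → G.E, Function.Injective ι ∧
      (∀ e', Sym2.map q (G.ends (ι e')) = G'.ends e') ∧ ∀ e', ∃ w ∈ G.ends (ι e'), w ∉ X := by
  obtain ⟨-, -, -, -, φ, hφ⟩ := h
  exact ⟨fun e' => (φ.symm e').1, fun e₁ e₂ h => φ.symm.injective (Subtype.ext h),
    fun e' => by rw [← hφ, Equiv.apply_symm_apply], fun e' => (φ.symm e').2⟩

theorem mem_of_map_eq_of_ne (h : IsConsolidation G X G' q x) {a b : G.V} (hab : q a = q b)
    (hne : a ≠ b) : a ∈ X := by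
  obtain ⟨-, hX, hnX, hinj, -⟩ := h
  by_contra ha
  by_cases hb : b ∈ X
  · exact hnX a ha (hab.trans (hX b hb))
  · exact hne (hinj a b ha hb hab)

theorem joinsFibres {u v : G.V} (h : IsConsolidation G {u, v} G' q x) {s : G.E}
    (hs : G.ends s = s(u, v)) : JoinsFibres q s := by
  intro a b hab hne
  have ha := h.mem_of_map_eq_of_ne hab hne
  have hb := h.mem_of_map_eq_of_ne hab.symm hne.symm
  simp only [Set.mem_insert_iff, Set.mem_singleton_iff] at ha hb
  rcases ha with rfl | rfl <;> rcases hb with rfl | rfl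
  all_goals first | exact absurd rfl hne | exact hs | exact hs.trans Sym2.eq_swap

end Multigraph.IsConsolidation

open Multigraph in
theorem consolidation_no_immersion_general (G H : Multigraph) (u v : G.V)
    (hpar : Nat.card H.E ≤ ({e | G.ends e = s(u, v)} : Set G.E).ncard)
    (hG : ¬ Immersion H G)
    (G' : Multigraph) (q : G.V → G'.V) (x : G'.V)
    (hcons : IsConsolidation G {u, v} G' q x) :
    ¬ Immersion H G' := by
  obtain ⟨σ⟩ : Nonempty (H.E ↪ {e : G.E | G.ends e = s(u, v)}) := by
    rw [← Cardinal.le_def, ← Nat.cast_card, ← Nat.cast_card, Nat.card_coe_set_eq]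
    exact_mod_cast hpar
  obtain ⟨ι, hι_inj, hι, hι_leaves⟩ := hcons.exists_edge_lift
  have hσι : ∀ f e', (σ f).1 ≠ ι e' := by
    intro f e' he
    obtain ⟨w, hw, hwX⟩ := hι_leaves e'
    rw [← he, (σ f).2, Sym2.mem_iff] at hw
    rcases hw with rfl | rfl <;> simp at hwX
  exact fun hH => hG (hH.of_lift hcons.1 hι_inj hι (Subtype.val_injective.comp σ.injective)
    hσι fun f => hcons.joinsFibres (σ f).2)

open Multigraph in
/-- consolidating two vertices joined by at least `|E(H)|` parallel edges
preserves not containing `H` as an immersion. -/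
theorem consolidation_no_immersion (G H : Multigraph) (u v : G.V) (huv : u ≠ v)
    (hpar : Nat.card H.E ≤ ({e | G.ends e = s(u, v)} : Set G.E).ncard)
    (hG : ¬ Immersion H G)
    (G' : Multigraph) (q : G.V → G'.V) (x : G'.V)
    (hcons : IsConsolidation G {u, v} G' q x) :
    ¬ Immersion H G' :=
  consolidation_no_immersion_general G H u v hpar hG G' q x hcons
end

section
/- Let G be a graph, J a 2|E(H)|-edge-connected subgraph of G, and G' the graph obtained from G by contracting V(J) to a single vertex. If G' contains H as a strong immersion, then G contains H as a strong immersion. -/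
open Multigraph

/-!
Each composite path of the immersion in `G'` is lifted to `G`. Away from the contracted vertex
`x` its edges and vertices lift uniquely; a path through `x` enters and leaves `V(J)` at two
vertices, which have to be reconnected inside `J`. These are at most `2|E(H)|` terminals, and a
Menger-type flow argument routes all of them to one vertex of `J` along pairwise edge-disjoint
walks: an augmenting path always exists, since otherwise the set reached by residual steps would
be separated from the sink by fewer than `2|E(H)|` edges of `J`. Every vertex of a lifted walk
projects onto its path in `G'`, so shortcutting the lifts to paths keeps the immersion strong.
-/

lemma sum_update_eq_sub_add {α M : Type*} [Fintype α] [DecidableEq α] [AddCommGroup M] (f : α → M)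
    (i : α) (b : M) : ∑ x, Function.update f i b x = ∑ x, f x - f i + b := by
  rw [Finset.sum_update_of_mem (Finset.mem_univ i),
    Finset.sum_eq_add_sum_sdiff_singleton_of_mem (Finset.mem_univ i) f]
  abel

namespace Multigraph

variable {G : Multigraph}

namespace Walk

attribute [simp] edges support

def append : ∀ {u v w : G.V}, G.Walk u v → G.Walk v w → G.Walk u w
  | _, _, _, .nil _, q => q
  | _, _, _, .cons e h p, q => .cons e h (p.append q)

def reverse : ∀ {u v : G.V}, G.Walk u v → G.Walk v u
  | _, _, .nil v => .nil v
  | _, _, .cons e h p => p.reverse.append (.cons e (h.trans Sym2.eq_swap) (.nil _))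

def darts : ∀ {u v : G.V}, G.Walk u v → List (G.E × G.V × G.V)
  | _, _, .nil _ => []
  | u, _, .cons (v := w) e _ p => (e, u, w) :: p.darts

@[simp] lemma darts_nil (v : G.V) : (nil v : G.Walk v v).darts = [] := rfl

@[simp] lemma darts_cons {u v w : G.V} (e : G.E) (h : G.ends e = s(u, v)) (p : G.Walk v w) :
    (cons e h p).darts = (e, u, v) :: p.darts := rfl

lemma isPath_cons {u v w : G.V} (e : G.E) (h : G.ends e = s(u, v)) (p : G.Walk v w) :
    (cons e h p).IsPath ↔ u ∉ p.support ∧ p.IsPath :=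
  List.nodup_cons

lemma start_mem_support {u v : G.V} (p : G.Walk u v) : u ∈ p.support := by
  cases p <;> simp

lemma end_mem_support : ∀ {u v : G.V} (p : G.Walk u v), v ∈ p.support
  | _, _, .nil _ => List.mem_singleton_self _
  | _, _, .cons _ _ p => List.mem_cons_of_mem _ p.end_mem_support

lemma support_ne_nil {u v : G.V} (p : G.Walk u v) : p.support ≠ [] :=
  List.ne_nil_of_mem p.start_mem_support

lemma map_fst_darts : ∀ {u v : G.V} (p : G.Walk u v), p.darts.map Prod.fst = p.edges
  | _, _, .nil _ => rfl
  | _, _, .cons e _ p => congrArg (e :: ·) p.map_fst_darts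

lemma edges_subset_of_darts_subset {u v u' v' : G.V} {p : G.Walk u v} {p' : G.Walk u' v'}
    (h : p.darts ⊆ p'.darts) : p.edges ⊆ p'.edges := by
  rw [← map_fst_darts, ← map_fst_darts]
  exact List.map_subset _ h

@[simp] lemma edges_append : ∀ {u v w : G.V} (p : G.Walk u v) (q : G.Walk v w),
    (p.append q).edges = p.edges ++ q.edges
  | _, _, _, .nil _, _ => rfl
  | _, _, _, .cons e _ p, q => congrArg (e :: ·) (p.edges_append q)

lemma support_eq_cons_s4 {u v : G.V} (p : G.Walk u v) : p.support = u :: p.support.tail := by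
  cases p <;> rfl

@[simp] lemma support_append : ∀ {u v w : G.V} (p : G.Walk u v) (q : G.Walk v w),
    (p.append q).support = p.support ++ q.support.tail
  | _, _, _, .nil _, q => q.support_eq_cons_s4
  | u, _, _, .cons _ _ p, q => congrArg (u :: ·) (p.support_append q)

lemma mem_support_append {u v w : G.V} (p : G.Walk u v) (q : G.Walk v w) {y : G.V} :
    y ∈ (p.append q).support ↔ y ∈ p.support ∨ y ∈ q.support := by
  rw [support_append, List.mem_append, q.support_eq_cons_s4, List.tail_cons, List.mem_cons]
  exact ⟨fun h => h.imp_right Or.inr, fun h => h.elim Or.inl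
    fun h' => h'.elim (fun hy => Or.inl (hy ▸ p.end_mem_support)) Or.inr⟩

@[simp] lemma mem_edges_reverse {u v : G.V} (p : G.Walk u v) {e : G.E} :
    e ∈ p.reverse.edges ↔ e ∈ p.edges := by
  induction p with
  | nil v => rfl
  | cons e' h p ih => simp [reverse, ih, or_comm]

@[simp] lemma support_reverse {u v : G.V} (p : G.Walk u v) :
    p.reverse.support = p.support.reverse := by
  induction p with
  | nil v => rfl
  | cons e h p ih => simp [reverse, ih]

lemma mem_support_of_mem_edges : ∀ {u v : G.V} {p : G.Walk u v} {e : G.E}, e ∈ p.edges →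
    ∀ y ∈ G.ends e, y ∈ p.support
  | _, _, .cons e' h p, e, he, y, hy => by
    rcases List.mem_cons.mp he with rfl | he
    · rw [h, Sym2.mem_iff] at hy
      rcases hy with rfl | rfl
      · exact List.mem_cons_self
      · exact List.mem_cons_of_mem _ p.start_mem_support
    · exact List.mem_cons_of_mem _ (mem_support_of_mem_edges he y hy)

lemma support_eq_dropLast_append : ∀ {u v : G.V} (p : G.Walk u v),
    p.support = p.support.dropLast ++ [v]
  | _, _, .nil _ => rfl
  | _, _, .cons _ _ p => by
    rw [support, List.dropLast_cons_of_ne_nil p.support_ne_nil, List.cons_append,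
      ← p.support_eq_dropLast_append]

lemma mem_support_cases {u v : G.V} {p : G.Walk u v} {y : G.V} (hy : y ∈ p.support) :
    y = u ∨ y = v ∨ y ∈ p.internals := by
  cases p with
  | nil => exact Or.inl (List.mem_singleton.mp hy)
  | cons e h p =>
    rcases List.mem_cons.mp hy with rfl | hy
    · exact Or.inl rfl
    · rw [p.support_eq_dropLast_append, List.mem_append, List.mem_singleton] at hy
      exact hy.elim (fun h => Or.inr (Or.inr h)) (fun h => Or.inr (Or.inl h))

lemma mem_support_of_mem_internals {u v : G.V} {p : G.Walk u v} {y : G.V}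
    (hy : y ∈ p.internals) : y ∈ p.support :=
  List.mem_of_mem_tail (List.dropLast_subset _ hy)

lemma IsPath.start_not_mem_internals {u v : G.V} {p : G.Walk u v} (hp : p.IsPath) :
    u ∉ p.internals := by
  cases p with
  | nil => exact List.not_mem_nil
  | cons e h p => exact fun hu => ((isPath_cons e h p).mp hp).1 (List.dropLast_subset _ hu)

lemma IsPath.end_not_mem_internals {u v : G.V} {p : G.Walk u v} (hp : p.IsPath) :
    v ∉ p.internals := by
  cases p with
  | nil => exact List.not_mem_nil
  | cons e h p =>
    have hnd : (p.support.dropLast ++ [v]).Nodup :=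
      p.support_eq_dropLast_append ▸ ((isPath_cons e h p).mp hp).2
    exact fun hv => (List.nodup_append.mp hnd).2.2 v hv v (List.mem_singleton_self v) rfl

lemma IsPath.edges_nodup : ∀ {u v : G.V} {p : G.Walk u v}, p.IsPath → p.edges.Nodup
  | _, _, .nil _, _ => List.nodup_nil
  | u, _, .cons e h p, hp => by
    rw [isPath_cons] at hp
    refine List.nodup_cons.mpr
      ⟨fun he => hp.1 (mem_support_of_mem_edges he u ?_), hp.2.edges_nodup⟩
    rw [h]
    exact Sym2.mem_mk_left u _

lemma exists_suffix : ∀ {u v : G.V} (p : G.Walk u v) {y : G.V}, y ∈ p.support →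
    ∃ r : G.Walk y v, r.support.Sublist p.support ∧ r.darts ⊆ p.darts
  | _, _, .nil _, _, hy => by
    obtain rfl := List.mem_singleton.mp hy
    exact ⟨.nil _, .refl _, fun _ h => h⟩
  | u, _, .cons e h p, y, hy => by
    by_cases hyu : y = u
    · subst hyu
      exact ⟨.cons e h p, .refl _, fun _ h => h⟩
    · obtain ⟨r, hr, hd⟩ := p.exists_suffix (by simpa [hyu] using hy)
      exact ⟨r, hr.cons u, List.Subset.trans hd (List.subset_cons_self _ _)⟩

lemma exists_isPath_s4 : ∀ {u v : G.V} (p : G.Walk u v),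
    ∃ r : G.Walk u v, r.IsPath ∧ r.support ⊆ p.support ∧ r.darts ⊆ p.darts
  | _, _, .nil v => ⟨.nil v, List.nodup_singleton v, fun _ h => h, fun _ h => h⟩
  | u, _, .cons e h p => by
    obtain ⟨r, hr, hs, hd⟩ := p.exists_isPath_s4
    by_cases hu : u ∈ r.support
    · obtain ⟨r', hs', hd'⟩ := r.exists_suffix hu
      exact ⟨r', hs'.nodup hr,
        List.Subset.trans hs'.subset (List.Subset.trans hs (List.subset_cons_self _ _)),
        List.Subset.trans hd' (List.Subset.trans hd (List.subset_cons_self _ _))⟩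
    · exact ⟨.cons e h r, (isPath_cons e h r).mpr ⟨hu, hr⟩, List.cons_subset_cons _ hs,
        List.cons_subset_cons _ hd⟩

lemma IsPath.exists_eq_append : ∀ {u v : G.V} {p : G.Walk u v}, p.IsPath → ∀ {x : G.V},
    x ∈ p.support → ∃ (p₁ : G.Walk u x) (p₂ : G.Walk x v),
      p = p₁.append p₂ ∧ x ∉ p₁.support.dropLast ∧ x ∉ p₂.support.tail
  | _, _, .nil _, _, _, hx => by
    obtain rfl := List.mem_singleton.mp hx
    exact ⟨.nil _, .nil _, rfl, List.not_mem_nil, List.not_mem_nil⟩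
  | u, _, .cons e h p, hp, x, hx => by
    rw [isPath_cons] at hp
    by_cases hxu : x = u
    · subst hxu
      exact ⟨.nil _, .cons e h p, rfl, List.not_mem_nil, hp.1⟩
    · obtain ⟨p₁, p₂, rfl, h₁, h₂⟩ := hp.2.exists_eq_append (by simpa [hxu] using hx)
      refine ⟨.cons e h p₁, p₂, rfl, ?_, h₂⟩
      rw [support, List.dropLast_cons_of_ne_nil p₁.support_ne_nil]
      exact List.not_mem_cons_of_ne_of_not_mem hxu h₁

lemma exists_walk_of_reflTransGen {P : G.E → G.V → G.V → Prop} {u v : G.V}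
    (h : Relation.ReflTransGen (fun a c => ∃ e, G.ends e = s(a, c) ∧ P e a c) u v) :
    ∃ p : G.Walk u v, ∀ s ∈ p.darts, P s.1 s.2.1 s.2.2 := by
  induction h using Relation.ReflTransGen.head_induction_on with
  | refl => exact ⟨.nil _, by simp⟩
  | head hac _ ih =>
    obtain ⟨e, he, hP⟩ := hac
    obtain ⟨p, hp⟩ := ih
    exact ⟨.cons e he p, by simpa [hP] using hp⟩

lemma exists_mem_edgeBoundary {R : Set G.V} : ∀ {u v : G.V} (p : G.Walk u v), u ∈ R → v ∉ R →
    ∃ e ∈ p.edges, e ∈ G.edgeBoundary R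
  | _, _, .nil _, hu, hv => absurd hu hv
  | u, _, .cons (v := w) e h p, hu, hv => by
    by_cases hw : w ∈ R
    · obtain ⟨e', he', hb⟩ := p.exists_mem_edgeBoundary hw hv
      exact ⟨e', List.mem_cons_of_mem _ he', hb⟩
    · exact ⟨e, List.mem_cons_self, u, w, h, hu, hw⟩

lemma support_subset_of_edges_subset {X : Set G.V} {EJ : Set G.E}
    (hsub : ∀ e ∈ EJ, ∀ w ∈ G.ends e, w ∈ X) : ∀ {u v : G.V} (p : G.Walk u v), u ∈ X →
    (∀ e ∈ p.edges, e ∈ EJ) → ∀ w ∈ p.support, w ∈ X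
  | _, _, .nil _, hu, _, w, hw => List.mem_singleton.mp hw ▸ hu
  | u, _, .cons (v := z) e h p, hu, hp, w, hw => by
    rcases List.mem_cons.mp hw with rfl | hw
    · exact hu
    · refine support_subset_of_edges_subset hsub p ?_
        (fun e' he' => hp e' (List.mem_cons_of_mem _ he')) w hw
      exact hsub e (hp e List.mem_cons_self) z (h ▸ Sym2.mem_mk_right _ _)

end Walk

/-- The edge-connectivity hypothesis on the subgraph `J = (X, EJ)`. -/
def EdgeConnectedOn (X : Set G.V) (EJ : Set G.E) (K : ℕ) : Prop :=
  ∀ F : Set G.E, F.ncard < K → ∀ u ∈ X, ∀ w ∈ X, ∃ p : G.Walk u w, ∀ e ∈ p.edges, e ∈ EJ \ F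

variable {X : Set G.V} {EJ : Set G.E} {K : ℕ}

lemma EdgeConnectedOn.le_ncard_edgeBoundary (h : EdgeConnectedOn X EJ K) {R : Set G.V}
    {u w : G.V} (hu : u ∈ X) (hw : w ∈ X) (huR : u ∈ R) (hwR : w ∉ R) :
    K ≤ (EJ ∩ G.edgeBoundary R).ncard := by
  by_contra hlt
  obtain ⟨p, hp⟩ := h _ (not_le.mp hlt) u hu w hw
  obtain ⟨e, he, hb⟩ := p.exists_mem_edgeBoundary huR hwR
  exact (hp e he).2 ⟨(hp e he).1, hb⟩

def arcExcess {α : Type*} [DecidableEq α] : Option (α × α) → α → ℤ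
  | none => 0
  | some (a, c) => Pi.single a 1 - Pi.single c 1

section Flow

variable [DecidableEq G.V]

lemma sum_arcExcess_some (R : Finset G.V) (a c : G.V) :
    ∑ v ∈ R, arcExcess (some (a, c)) v = (if a ∈ R then 1 else 0) - (if c ∈ R then 1 else 0) := by
  simp [arcExcess, Finset.sum_sub_distrib, Finset.sum_pi_single']

variable [Fintype G.E] {ι : Type*}

/-- A unit flow `d`: `d e = some (a, c)` sends one unit along `e` from `a` to `c`, and
`d e = none` leaves `e` unused. -/
def excess (d : G.E → Option (G.V × G.V)) : G.V → ℤ := ∑ e, arcExcess (d e)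

def IsFlowOn (EJ : Set G.E) (d : G.E → Option (G.V × G.V)) : Prop :=
  ∀ e a c, d e = some (a, c) → G.ends e = s(a, c) ∧ e ∈ EJ

def Residual (EJ : Set G.E) (d : G.E → Option (G.V × G.V)) (e : G.E) (a c : G.V) : Prop :=
  e ∈ EJ ∧ (d e = none ∨ d e = some (c, a))

def ResidualAdj (EJ : Set G.E) (d : G.E → Option (G.V × G.V)) (a c : G.V) : Prop :=
  ∃ e, G.ends e = s(a, c) ∧ Residual EJ d e a c

lemma excess_update [DecidableEq G.E] (d : G.E → Option (G.V × G.V)) (e : G.E)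
    (o : Option (G.V × G.V)) :
    excess (Function.update d e o) = excess d - arcExcess (d e) + arcExcess o := by
  simp only [excess, ← sum_update_eq_sub_add]
  exact Finset.sum_congr rfl fun e' _ => Function.apply_update (fun _ => arcExcess) d e o e'

lemma IsFlowOn.exists_augment : ∀ {d : G.E → Option (G.V × G.V)} {τ b : G.V} (p : G.Walk τ b),
    IsFlowOn EJ d → p.edges.Nodup → (∀ s ∈ p.darts, Residual EJ d s.1 s.2.1 s.2.2) →
    ∃ d', IsFlowOn EJ d' ∧ excess d' = excess d + Pi.single τ 1 - Pi.single b 1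
  | d, _, _, .nil _, hd, _, _ => ⟨d, hd, by abel⟩
  | d, τ, _, .cons (v := w) e h p, hd, hnd, hres => by
    classical
    obtain ⟨⟨heJ, hde⟩, hres⟩ := List.forall_mem_cons.mp hres
    obtain ⟨hep, hnd⟩ := List.nodup_cons.mp hnd
    set d₁ := Function.update d e (if d e = none then some (τ, w) else none)
    have hd₁ : IsFlowOn EJ d₁ := by
      intro e' a c he'
      by_cases hee : e' = e
      · subst hee
        by_cases hn : d e' = none <;> simp_all [d₁]
      · exact hd e' a c (by simpa [d₁, hee] using he')
    have hex₁ : excess d₁ = excess d + Pi.single τ 1 - Pi.single w 1 := by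
      rw [excess_update]
      rcases hde with hde | hde <;> simp [hde, arcExcess] <;> abel
    have hres₁ : ∀ s ∈ p.darts, Residual EJ d₁ s.1 s.2.1 s.2.2 := by
      intro s hs
      have hse : s.1 ≠ e := fun h' => hep (h' ▸ p.map_fst_darts ▸ List.mem_map_of_mem hs)
      simpa [Residual, d₁, hse] using hres s hs
    obtain ⟨d', hd', hex'⟩ := IsFlowOn.exists_augment p hd₁ hnd hres₁
    exact ⟨d', hd', by rw [hex', hex₁]; abel⟩

/-- Every `EJ`-edge leaving a set `R` closed under residual steps carries a unit out of `R`, and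
no unit enters `R`. -/
lemma IsFlowOn.ncard_edgeBoundary_le_sum_excess {d : G.E → Option (G.V × G.V)}
    (hd : IsFlowOn EJ d) (R : Finset G.V)
    (hR : ∀ e a c, G.ends e = s(a, c) → Residual EJ d e a c → a ∈ R → c ∈ R) :
    ((EJ ∩ G.edgeBoundary ↑R).ncard : ℤ) ≤ ∑ v ∈ R, excess d v := by
  classical
  set flux : G.E → ℤ := fun e => ∑ v ∈ R, arcExcess (d e) v
  have hsum : ∑ v ∈ R, excess d v = ∑ e, flux e := by
    simp only [excess, Finset.sum_apply, flux]
    exact Finset.sum_comm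
  have hnonneg : ∀ e, 0 ≤ flux e := by
    intro e
    rcases he : d e with _ | ⟨a, c⟩
    · simp [flux, he, arcExcess]
    · obtain ⟨hends, heJ⟩ := hd e a c he
      have hca : c ∈ R → a ∈ R :=
        hR e c a (hends.trans Sym2.eq_swap) ⟨heJ, Or.inr he⟩
      simp only [flux, he, sum_arcExcess_some]
      split_ifs <;> simp_all
  have hone : ∀ e ∈ (EJ ∩ G.edgeBoundary ↑R).toFinset, 1 ≤ flux e := by
    intro e he
    obtain ⟨heJ, a, c, hends, haR, hcR⟩ := Set.mem_toFinset.mp he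
    rw [Finset.mem_coe] at haR hcR
    rcases hde : d e with _ | ⟨a', c'⟩
    · exact absurd (hR e a c hends ⟨heJ, Or.inl hde⟩ haR) hcR
    · rw [(hd e a' c' hde).1, Sym2.eq_iff] at hends
      rcases hends with ⟨rfl, rfl⟩ | ⟨rfl, rfl⟩
      · simp [flux, hde, sum_arcExcess_some, haR, hcR]
      · exact absurd (hR e c' a' ((hd e a' c' hde).1.trans Sym2.eq_swap)
          ⟨heJ, Or.inr hde⟩ haR) hcR
  rw [hsum, Set.ncard_eq_toFinset_card']
  calc ((EJ ∩ G.edgeBoundary ↑R).toFinset.card : ℤ)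
      = (EJ ∩ G.edgeBoundary ↑R).toFinset.card • (1 : ℤ) := by simp
    _ ≤ ∑ e ∈ (EJ ∩ G.edgeBoundary ↑R).toFinset, flux e := Finset.card_nsmul_le_sum _ _ _ hone
    _ ≤ ∑ e, flux e :=
      Finset.sum_le_sum_of_subset_of_nonneg (Finset.subset_univ _) fun e _ _ => hnonneg e

/-- Otherwise the vertices reachable from `τ` by residual steps would be cut off from `b` by at
least `K` edges, all carrying units out of them, while only `#T < K` units start there. -/
lemma EdgeConnectedOn.reflTransGen_residual (hconn : EdgeConnectedOn X EJ K)
    {d : G.E → Option (G.V × G.V)} (hd : IsFlowOn EJ d) {b τ : G.V} (hb : b ∈ X) (hτ : τ ∈ X)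
    (t : ι → G.V) (T : Finset ι) (hT : T.card < K)
    (hex : ∀ v, v ≠ b → excess d v = ∑ i ∈ T, (Pi.single (t i) 1 : G.V → ℤ) v) :
    Relation.ReflTransGen (ResidualAdj EJ d) τ b := by
  classical
  have := Fintype.ofFinite G.V
  by_contra hτb
  set R := Finset.univ.filter (Relation.ReflTransGen (ResidualAdj EJ d) τ)
  have hbR : b ∉ R := by simpa [R] using hτb
  have hcut := hconn.le_ncard_edgeBoundary (R := ↑R) hτ hb
    (by simp [R, Relation.ReflTransGen.refl]) (by simpa using hbR)
  have hflow := hd.ncard_edgeBoundary_le_sum_excess R fun e a c he hres ha => by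
    simp only [R, Finset.mem_filter, Finset.mem_univ, true_and] at ha ⊢
    exact ha.tail ⟨e, he, hres⟩
  have hterm : ∑ v ∈ R, excess d v ≤ T.card := by
    calc ∑ v ∈ R, excess d v = ∑ v ∈ R, ∑ i ∈ T, (Pi.single (t i) 1 : G.V → ℤ) v :=
          Finset.sum_congr rfl fun v hv => hex v fun h => hbR (h ▸ hv)
      _ = ∑ i ∈ T, if t i ∈ R then 1 else 0 := by
          rw [Finset.sum_comm]
          simp [Finset.sum_pi_single']
      _ ≤ ∑ _i ∈ T, 1 := Finset.sum_le_sum fun i _ => by split_ifs <;> norm_num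
      _ = T.card := by simp
  omega

lemma EdgeConnectedOn.exists_flow (hconn : EdgeConnectedOn X EJ K) {b : G.V} (hb : b ∈ X)
    (t : ι → G.V) (ht : ∀ i, t i ∈ X) (T : Finset ι) (hT : T.card ≤ K) :
    ∃ d, IsFlowOn EJ d ∧ ∀ v, v ≠ b → excess d v = ∑ i ∈ T, (Pi.single (t i) 1 : G.V → ℤ) v := by
  classical
  induction T using Finset.induction_on with
  | empty =>
    exact ⟨fun _ => none, fun _ _ _ h => by simp at h, fun v _ => by simp [excess, arcExcess]⟩
  | insert i T hi ih =>
    rw [Finset.card_insert_of_notMem hi] at hT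
    obtain ⟨d, hd, hex⟩ := ih (by omega)
    obtain ⟨p, hp⟩ := Walk.exists_walk_of_reflTransGen
      (hconn.reflTransGen_residual hd hb (ht i) t T (by omega) hex)
    obtain ⟨p', hp', -, hdarts⟩ := p.exists_isPath_s4
    obtain ⟨d', hd', hex'⟩ := hd.exists_augment p' hp'.edges_nodup fun s hs => hp s (hdarts hs)
    refine ⟨d', hd', fun v hv => ?_⟩
    simp [hex', hex v hv, Finset.sum_insert hi, Pi.single_apply, hv, add_comm]

lemma exists_arc_of_excess_pos {d : G.E → Option (G.V × G.V)} {v : G.V} (h : 0 < excess d v) :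
    ∃ e c, d e = some (v, c) := by
  by_contra! hno
  rw [excess, Finset.sum_apply] at h
  refine h.not_ge (Finset.sum_nonpos fun e _ => ?_)
  rcases hde : d e with _ | ⟨a, c⟩
  · simp [arcExcess]
  · have hav : a ≠ v := fun hav => hno e c (hav ▸ hde)
    simp [arcExcess, Pi.single_apply, hav.symm]
    split_ifs <;> norm_num

lemma IsFlowOn.exists_peel [Fintype ι] [DecidableEq ι] [DecidableEq G.E]
    {d : G.E → Option (G.V × G.V)} (hd : IsFlowOn EJ d) {b : G.V} {t : ι → G.V}
    (hex : ∀ v, v ≠ b → excess d v = ∑ i, (Pi.single (t i) 1 : G.V → ℤ) v) {i : ι}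
    (hi : t i ≠ b) :
    ∃ e c, d e = some (t i, c) ∧ IsFlowOn EJ (Function.update d e none) ∧
      ∀ v, v ≠ b → excess (Function.update d e none) v =
        ∑ j, (Pi.single (Function.update t i c j) 1 : G.V → ℤ) v := by
  obtain ⟨e, c, hde⟩ : ∃ e c, d e = some (t i, c) := by
    refine exists_arc_of_excess_pos ?_
    rw [hex _ hi]
    exact Finset.sum_pos' (fun j _ => by simp [Pi.single_apply]; split_ifs <;> norm_num)
      ⟨i, Finset.mem_univ i, by simp⟩
  refine ⟨e, c, hde, fun e' a c' he' => ?_, fun v hv => ?_⟩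
  · by_cases hee : e' = e
    · simp [hee] at he'
    · exact hd e' a c' (by simpa [hee] using he')
  · have hsum := sum_update_eq_sub_add (fun j => (Pi.single (t j) 1 : G.V → ℤ) v) i
      ((Pi.single c 1 : G.V → ℤ) v)
    simp only [← Function.apply_update (fun _ a => (Pi.single a 1 : G.V → ℤ) v)] at hsum
    rw [hsum, ← hex v hv, excess_update, hde]
    simp [arcExcess]
    abel

/-- Flow decomposition. The colouring `col` records which walk uses each edge, which makes the
walks edge-disjoint by construction. -/
lemma IsFlowOn.exists_coloring [Fintype ι] {d : G.E → Option (G.V × G.V)} (hd : IsFlowOn EJ d)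
    {b : G.V} (t : ι → G.V)
    (hex : ∀ v, v ≠ b → excess d v = ∑ i, (Pi.single (t i) 1 : G.V → ℤ) v) :
    ∃ col : G.E → Option ι, ∀ i, ∃ W : G.Walk (t i) b,
      ∀ e ∈ W.edges, col e = some i ∧ d e ≠ none := by
  classical
  induction hn : (Finset.univ.filter fun e => d e ≠ none).card using Nat.strong_induction_on
    generalizing d t with
  | _ n ih =>
    by_cases hall : ∀ i, t i = b
    · exact ⟨fun _ => none, fun i => by rw [hall i]; exact ⟨.nil b, by simp⟩⟩
    obtain ⟨i, hi⟩ := not_forall.mp hall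
    obtain ⟨e, c, hde, hd', hex'⟩ := hd.exists_peel hex hi
    set d' := Function.update d e none
    have hlt : (Finset.univ.filter fun e => d' e ≠ none).card < n := by
      rw [← hn]
      refine Finset.card_lt_card ⟨fun e' => by by_cases hee : e' = e <;> simp_all [d'], ?_⟩
      intro hsub
      simpa [d'] using hsub (by simp [hde] : e ∈ Finset.univ.filter fun e => d e ≠ none)
    obtain ⟨col, hcol⟩ := ih _ hlt hd' _ hex' rfl
    have hfresh : ∀ j, ∀ {u} (W : G.Walk u b), (∀ e' ∈ W.edges, col e' = some j ∧ d' e' ≠ none) →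
        ∀ e' ∈ W.edges, Function.update col e (some i) e' = some j ∧ d e' ≠ none := by
      intro j u W hW e' he'
      have hee : e' ≠ e := fun h => (hW e' he').2 (by simp [d', h])
      simpa [d', Function.update_of_ne hee] using hW e' he'
    refine ⟨Function.update col e (some i), fun j => ?_⟩
    by_cases hji : j = i
    · subst hji
      have hWj := hcol j
      rw [Function.update_self] at hWj
      obtain ⟨W, hW⟩ := hWj
      refine ⟨.cons e (hd e _ _ hde).1 W, fun e' he' => ?_⟩
      rcases List.mem_cons.mp he' with rfl | he'
      · simp [hde]
      · exact hfresh j W hW e' he'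
    · have hWj := hcol j
      rw [Function.update_of_ne hji] at hWj
      obtain ⟨W, hW⟩ := hWj
      exact ⟨W, hfresh j W hW⟩

end Flow

theorem EdgeConnectedOn.exists_walks_to (hconn : EdgeConnectedOn X EJ K) {ι : Type*} [Finite ι]
    (hK : Nat.card ι ≤ K) {b : G.V} (hb : b ∈ X) (t : ι → G.V) (ht : ∀ i, t i ∈ X) :
    ∃ Q : ∀ i, G.Walk (t i) b, (∀ i, ∀ e ∈ (Q i).edges, e ∈ EJ) ∧
      ∀ i j, i ≠ j → ∀ e ∈ (Q i).edges, e ∉ (Q j).edges := by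
  classical
  have := Fintype.ofFinite ι
  have := Fintype.ofFinite G.E
  obtain ⟨d, hd, hex⟩ := hconn.exists_flow hb t ht Finset.univ
    (by rwa [Finset.card_univ, ← Nat.card_eq_fintype_card])
  obtain ⟨col, hcol⟩ := hd.exists_coloring t hex
  choose Q hQ using hcol
  refine ⟨Q, fun i e he => ?_, fun i j hij e hi hj => hij ?_⟩
  · obtain ⟨p, hp⟩ := Option.ne_none_iff_exists'.mp (hQ i e he).2
    exact (hd e p.1 p.2 hp).2
  · exact Option.some_injective _ ((hQ i e hi).1.symm.trans (hQ j e hj).1)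

/-- Each pair is linked through a common sink, to which all `2|ι|` terminals are routed. -/
theorem EdgeConnectedOn.exists_linkage (hconn : EdgeConnectedOn X EJ K) {ι : Type*} [Finite ι]
    (hK : 2 * Nat.card ι ≤ K) (s t : ι → G.V) (hs : ∀ i, s i ∈ X) (ht : ∀ i, t i ∈ X) :
    ∃ C : ∀ i, G.Walk (s i) (t i), (∀ i, ∀ e ∈ (C i).edges, e ∈ EJ) ∧
      ∀ i j, i ≠ j → ∀ e ∈ (C i).edges, e ∉ (C j).edges := by
  rcases isEmpty_or_nonempty ι with hι | ⟨⟨i₀⟩⟩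
  · exact ⟨fun i => isEmptyElim i, fun i => isEmptyElim i, fun i => isEmptyElim i⟩
  obtain ⟨Q, hQE, hQ⟩ := hconn.exists_walks_to (by rw [Nat.card_sum]; omega) (hs i₀)
    (Sum.elim s t) (Sum.forall.mpr ⟨hs, ht⟩)
  have hmem : ∀ i e, e ∈ ((Q (.inl i)).append (Q (.inr i)).reverse).edges →
      ∃ k, (k = .inl i ∨ k = .inr i) ∧ e ∈ (Q k).edges := by
    intro i e he
    rcases List.mem_append.mp (Walk.edges_append _ _ ▸ he) with he | he
    · exact ⟨_, Or.inl rfl, he⟩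
    · exact ⟨_, Or.inr rfl, (Walk.mem_edges_reverse _).mp he⟩
  refine ⟨fun i => (Q (.inl i)).append (Q (.inr i)).reverse, fun i e he => ?_,
    fun i j hij e hi hj => ?_⟩
  · obtain ⟨k, -, hk⟩ := hmem i e he
    exact hQE k e hk
  · obtain ⟨k, hk, hek⟩ := hmem i e hi
    obtain ⟨k', hk', hek'⟩ := hmem j e hj
    refine hQ k k' ?_ e hek hek'
    rintro rfl
    rcases hk with rfl | rfl <;> rcases hk' with h | h <;> simp_all

namespace IsConsolidation

variable {G' : Multigraph} {q : G.V → G'.V} {x : G'.V}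

lemma map_eq_iff (hc : IsConsolidation G X G' q x) {a : G.V} : q a = x ↔ a ∈ X :=
  ⟨fun h => by_contra fun ha => hc.2.2.1 a ha h, hc.2.1 a⟩

lemma eq_of_map_eq (hc : IsConsolidation G X G' q x) {a b : G.V} (h : q a = q b)
    (hx : q a ≠ x) : a = b :=
  hc.2.2.2.1 a b (fun ha => hx (hc.map_eq_iff.mpr ha))
    (fun hb => hx (h.trans (hc.map_eq_iff.mpr hb))) h

noncomputable def vertexLift (hc : IsConsolidation G X G' q x) : G'.V → G.V :=
  Function.surjInv hc.1

lemma map_vertexLift (hc : IsConsolidation G X G' q x) (y : G'.V) : q (hc.vertexLift y) = y :=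
  Function.surjInv_eq hc.1 y

noncomputable def edgeEquiv (hc : IsConsolidation G X G' q x) :
    {e : G.E // ∃ w ∈ G.ends e, w ∉ X} ≃ G'.E :=
  hc.2.2.2.2.choose

noncomputable def edgeLift (hc : IsConsolidation G X G' q x) (e : G'.E) : G.E :=
  (hc.edgeEquiv.symm e).1

lemma edgeLift_injective (hc : IsConsolidation G X G' q x) : Function.Injective hc.edgeLift :=
  fun _ _ h => hc.edgeEquiv.symm.injective (Subtype.ext h)

lemma ends_edgeEquiv (hc : IsConsolidation G X G' q x)
    (e : {e : G.E // ∃ w ∈ G.ends e, w ∉ X}) : G'.ends (hc.edgeEquiv e) = Sym2.map q (G.ends e.1) :=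
  hc.2.2.2.2.choose_spec e

lemma map_ends_edgeLift (hc : IsConsolidation G X G' q x) (e : G'.E) :
    Sym2.map q (G.ends (hc.edgeLift e)) = G'.ends e := by
  rw [edgeLift, ← hc.ends_edgeEquiv, Equiv.apply_symm_apply]

lemma edgeLift_not_mem (hc : IsConsolidation G X G' q x)
    (hsub : ∀ e ∈ EJ, ∀ w ∈ G.ends e, w ∈ X) (e : G'.E) : hc.edgeLift e ∉ EJ := fun h =>
  let ⟨w, hw, hwX⟩ := (hc.edgeEquiv.symm e).2
  hwX (hsub _ h w hw)

lemma exists_ends_edgeLift (hc : IsConsolidation G X G' q x) {e : G'.E} {y z : G'.V}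
    (he : G'.ends e = s(y, z)) :
    ∃ a c, G.ends (hc.edgeLift e) = s(a, c) ∧ q a = y ∧ q c = z := by
  have h := hc.map_ends_edgeLift e
  induction hends : G.ends (hc.edgeLift e) using Sym2.ind with
  | h a c =>
    rw [hends, he, Sym2.map_mk, Sym2.eq_iff] at h
    rcases h with ⟨rfl, rfl⟩ | ⟨rfl, rfl⟩
    · exact ⟨a, c, rfl, rfl, rfl⟩
    · exact ⟨c, a, Sym2.eq_swap, rfl, rfl⟩

lemma exists_lift (hc : IsConsolidation G X G' q x) : ∀ {u v : G'.V} (W : G'.Walk u v),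
    x ∉ W.support.tail → ∃ a, q a = u ∧ ∃ Wg : G.Walk a (hc.vertexLift v),
      Wg.edges = W.edges.map hc.edgeLift ∧ ∀ w ∈ Wg.support, q w ∈ W.support
  | _, _, .nil v, _ => ⟨_, hc.map_vertexLift v, .nil _, rfl, by simp [hc.map_vertexLift]⟩
  | u, _, .cons (v := z) e h W, hx => by
    simp only [Walk.support, List.tail_cons] at hx
    obtain ⟨a₂, ha₂, Wg, hWe, hWs⟩ := hc.exists_lift W fun h' => hx (List.mem_of_mem_tail h')
    obtain ⟨a, c, hac, rfl, hcz⟩ := hc.exists_ends_edgeLift h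
    have hz : z ≠ x := fun h' => hx (h' ▸ W.start_mem_support)
    obtain rfl : c = a₂ := hc.eq_of_map_eq (hcz.trans ha₂.symm) (hcz ▸ hz)
    refine ⟨a, rfl, .cons _ hac Wg, by simp [hWe], fun w hw => ?_⟩
    rcases List.mem_cons.mp hw with rfl | hw
    · exact List.mem_cons_self
    · exact List.mem_cons_of_mem _ (hWs w hw)

/-- The path passes `x` at most once; `a₁` and `a₂` are where the lifts of its two halves meet
`X`. -/
lemma exists_lift_of_isPath (hc : IsConsolidation G X G' q x) {u v : G'.V} {P : G'.Walk u v}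
    (hP : P.IsPath) : ∃ a₁ a₂, a₁ ∈ X ∧ a₂ ∈ X ∧ ∀ C : G.Walk a₁ a₂, (∀ w ∈ C.support, w ∈ X) →
      ∃ W : G.Walk (hc.vertexLift u) (hc.vertexLift v),
        (∀ e ∈ W.edges, e ∈ P.edges.map hc.edgeLift ∨ e ∈ C.edges) ∧
        ∀ w ∈ W.support, q w ∈ P.support := by
  by_cases hx : x ∈ P.support
  · obtain ⟨P₁, P₂, rfl, h₁, h₂⟩ := hP.exists_eq_append hx
    obtain ⟨a₁, ha₁, W₁, hW₁e, hW₁s⟩ := hc.exists_lift P₁.reverse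
      (by rwa [Walk.support_reverse, List.tail_reverse, List.mem_reverse])
    obtain ⟨a₂, ha₂, W₂, hW₂e, hW₂s⟩ := hc.exists_lift P₂ h₂
    refine ⟨a₁, a₂, hc.map_eq_iff.mp ha₁, hc.map_eq_iff.mp ha₂, fun C hC =>
      ⟨W₁.reverse.append (C.append W₂), fun e he => ?_, fun w hw => ?_⟩⟩
    · simp only [Walk.edges_append, List.mem_append, Walk.mem_edges_reverse, hW₁e, hW₂e,
        List.mem_map] at he ⊢
      aesop
    · simp only [Walk.mem_support_append, Walk.support_reverse, List.mem_reverse] at hw ⊢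
      rcases hw with hw | hw | hw
      · exact .inl (by simpa using hW₁s w hw)
      · exact .inl ((hc.map_eq_iff.mpr (hC w hw)) ▸ P₁.end_mem_support)
      · exact .inr (hW₂s w hw)
  · obtain ⟨a, ha, W, hWe, hWs⟩ := hc.exists_lift P fun h => hx (List.mem_of_mem_tail h)
    have hu : u ≠ x := fun h => hx (h ▸ P.start_mem_support)
    obtain rfl : a = hc.vertexLift u :=
      hc.eq_of_map_eq (ha.trans (hc.map_vertexLift u).symm) (ha ▸ hu)
    exact ⟨_, _, hc.map_eq_iff.mp (hc.map_vertexLift x), hc.map_eq_iff.mp (hc.map_vertexLift x),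
      fun _ _ => ⟨W, fun e he => .inl (hWe ▸ he), hWs⟩⟩

end IsConsolidation

end Multigraph

open Multigraph in
theorem ImmersionData.Strong.lift {H G G' : Multigraph} {I : ImmersionData H G'} (hI : I.Strong)
    {L : G'.V → G.V} {q : G.V → G'.V} (hqL : Function.LeftInverse q L)
    (W : ∀ f, G.Walk (L (I.pathEnds f).1) (L (I.pathEnds f).2))
    (hdisj : ∀ f f', f ≠ f' → ∀ e ∈ (W f).edges, e ∉ (W f').edges)
    (hsupp : ∀ f, ∀ w ∈ (W f).support, q w ∈ (I.path f).support) : StrongImmersion H G := by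
  choose B hB hBs hBd using fun f => (W f).exists_isPath_s4
  refine ⟨⟨L ∘ I.π, hqL.injective.comp I.inj, fun f => (L (I.pathEnds f).1, L (I.pathEnds f).2),
    B, fun f => ?_, hB, fun f f' hff e he he' => hdisj f f' hff e
      (Walk.edges_subset_of_darts_subset (hBd f) he)
      (Walk.edges_subset_of_darts_subset (hBd f') he')⟩, fun f v hv => ?_⟩
  · rw [← Sym2.map_map, I.ends_eq f, Sym2.map_mk]
  · have hmem := hsupp f _ (hBs f (Walk.mem_support_of_mem_internals hv))
    simp only [Function.comp_apply, hqL (I.π v)] at hv hmem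
    rcases Walk.mem_support_cases hmem with h | h | h
    · exact (hB f).start_not_mem_internals (by rwa [h] at hv)
    · exact (hB f).end_not_mem_internals (by rwa [h] at hv)
    · exact hI f v h

open Multigraph in
theorem contract_strongImmersion_general (G H : Multigraph) (VJ : Set G.V) (EJ : Set G.E)
    (hJsub : ∀ e ∈ EJ, ∀ w ∈ G.ends e, w ∈ VJ)
    (hJconn : ∀ F : Set G.E, F.ncard < 2 * Nat.card H.E →
      ∀ u ∈ VJ, ∀ w ∈ VJ, ∃ p : G.Walk u w, ∀ e ∈ p.edges, e ∈ EJ \ F)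
    (G' : Multigraph) (q : G.V → G'.V) (x : G'.V)
    (hcons : IsConsolidation G VJ G' q x)
    (h : StrongImmersion H G') : StrongImmersion H G := by
  obtain ⟨I, hI⟩ := h
  choose a₁ a₂ ha₁ ha₂ hlift using fun f => hcons.exists_lift_of_isPath (I.isPath f)
  obtain ⟨C, hCE, hCdisj⟩ := EdgeConnectedOn.exists_linkage hJconn le_rfl a₁ a₂ ha₁ ha₂
  choose W hWE hWs using fun f =>
    hlift f (C f) (Walk.support_subset_of_edges_subset hJsub (C f) (ha₁ f) (hCE f))
  refine hI.lift hcons.map_vertexLift W (fun f f' hff e he he' => ?_) hWs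
  rcases hWE f e he with h | h <;> rcases hWE f' e he' with h' | h'
  · obtain ⟨e₁, he₁, rfl⟩ := List.mem_map.mp h
    obtain ⟨e₂, he₂, heq⟩ := List.mem_map.mp h'
    exact I.edge_disj f f' hff e₁ he₁ (by rwa [← hcons.edgeLift_injective heq])
  · obtain ⟨e₁, -, rfl⟩ := List.mem_map.mp h
    exact hcons.edgeLift_not_mem hJsub e₁ (hCE f' _ h')
  · obtain ⟨e₂, -, rfl⟩ := List.mem_map.mp h'
    exact hcons.edgeLift_not_mem hJsub e₂ (hCE f _ h)
  · exact hCdisj f f' hff e h h'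

open Multigraph in
/-- contracting a `2|E(H)|`-edge-connected subgraph preserves containing `H`
as a strong immersion. -/
theorem contract_strongImmersion (G H : Multigraph) (VJ : Set G.V) (EJ : Set G.E)
    (hJsub : ∀ e ∈ EJ, ∀ w ∈ G.ends e, w ∈ VJ) (hne : VJ.Nonempty)
    (hJconn : ∀ F : Set G.E, F.ncard < 2 * Nat.card H.E →
      ∀ u ∈ VJ, ∀ w ∈ VJ, ∃ p : G.Walk u w, ∀ e ∈ p.edges, e ∈ EJ \ F)
    (G' : Multigraph) (q : G.V → G'.V) (x : G'.V)
    (hcons : IsConsolidation G VJ G' q x)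
    (h : StrongImmersion H G') : StrongImmersion H G :=
  contract_strongImmersion_general G H VJ EJ hJsub hJconn G' q x hcons h
end

section
/- Let x_1, …, x_n be vertices in a graph G such that there are at least k parallel edges between x_i and x_{i+1} for every 1 ≤ i ≤ n-1, and let y be a vertex with at least k² neighbors among {x_1,…,x_n}. Then G contains K_k as a strong immersion. -/
open Multigraph

/-!
Enumerate the neighbours of `y` along the path and cut them into `k` blocks of `k - 1`
consecutive neighbours each, no block straddling `y` itself if `y` lies on the path; this costs
fewer than `k - 1` neighbours, so `k²` suffice. Ports `0, …, k - 2` of block `c` are its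
neighbours of `y`, and its branch vertex is port `c - 1`. For `a < b` the composite path leaves
the branch vertex of block `a` along the path to port `b - 1`, jumps to `y` and back to port `a`
of block `b`, and follows the path to the branch vertex of block `b`. Within block `a` it uses
the `b`-th of the `k` parallel edges and within block `b` the `a`-th, and port `j` of block `c`
is used only by the pair `{j, c}` (if `j < c`) or `{c, j + 1}` (if `j ≥ c`), so the composite
paths are edge-disjoint; they avoid the other branch vertices because those lie in other blocks.
-/

theorem List.map_range'_append_cons {α : Type*} (f : ℕ → α) {p q : ℕ} (h : p ≤ q)
    (l : List α) :
    (List.range' p (q - p)).map f ++ f q :: l = (List.range' p (q + 1 - p)).map f ++ l := by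
  rw [show q + 1 - p = q - p + 1 by omega, List.range'_concat]
  simp [show p + (q - p) = q by omega]

theorem exists_mapsTo_injOn_Iio_of_le_ncard {α : Type*} [Finite α] [Nonempty α] {s : Set α}
    {k : ℕ} (h : k ≤ s.ncard) :
    ∃ f : ℕ → α, Set.MapsTo f (Set.Iio k) s ∧ Set.InjOn f (Set.Iio k) :=
  (Set.finite_Iio k).exists_injOn_of_encard_le (by
    rw [← Finset.coe_range, Set.encard_coe_eq_coe_finsetCard, Finset.card_range,
      ← Set.Finite.cast_ncard_eq (Set.toFinite s)]
    exact_mod_cast h)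

/-- Blocks of length `w` start at multiples of `w` as long as they end before `c`; the later
ones are shifted by `c % w`, so that they start at or after `c`. -/
theorem exists_block_starts (w c : ℕ) (hw : 0 < w) :
    ∃ s : ℕ → ℕ, (∀ a a', a < a' → s a + w ≤ s a') ∧ (∀ a, s a < (a + 1) * w) ∧
      (∀ a, s a + w ≤ c ∨ c ≤ s a) := by
  have hc := Nat.div_add_mod c w
  have hr := Nat.mod_lt c hw
  set s : ℕ → ℕ := fun a => a * w + if (a + 1) * w ≤ c then 0 else c % w
  have h_step : ∀ a, s a + w ≤ s (a + 1) := fun a => by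
    simp only [s, Nat.succ_mul]
    split_ifs <;> omega
  refine ⟨s, fun a a' h => ?_, fun a => ?_, fun a => ?_⟩
  · induction a', h using Nat.le_induction with
    | base => exact h_step a
    | succ a' _ ih => exact ih.trans ((Nat.le_add_right _ _).trans (h_step a'))
  · simp only [s, Nat.succ_mul]
    split_ifs <;> omega
  · simp only [s]
    split_ifs with h
    · rw [Nat.succ_mul] at h
      omega
    · have hq : c / w < a + 1 := (Nat.div_lt_iff_lt_mul hw).2 (not_le.1 h)
      have := Nat.mul_le_mul_left w (Nat.lt_succ_iff.1 hq)
      rw [Nat.mul_comm w a] at this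
      omega

theorem Nat.lt_nth_of_count_le {S : Finset ℕ} {m i : ℕ} (hm : m ∉ S) (hi : i < S.card)
    (h : Nat.count (· ∈ S) m ≤ i) : m < Nat.nth (· ∈ S) i := by
  have hf : (Set.ofPred (· ∈ S)).Finite := S.finite_toSet
  have hcard : i < hf.toFinset.card := by simpa using hi
  have hmem : Nat.nth (· ∈ S) i ∈ S := Nat.nth_mem_of_lt_card hf hcard
  by_contra! hle
  have hlt : Nat.nth (· ∈ S) i < m := hle.lt_of_ne (fun h => hm (h ▸ hmem))
  have := Nat.count_strict_mono hmem hlt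
  rw [Nat.count_nth_of_lt_card_finite hf hcard] at this
  exact absurd (this.trans_le h) (lt_irrefl i)

theorem exists_ports {k : ℕ} (hk : 2 ≤ k) (S : Finset ℕ) (hS : k ^ 2 ≤ S.card) {m₀ : ℕ}
    (hm₀ : m₀ ∉ S) :
    ∃ port : ℕ → ℕ → ℕ, (∀ a < k, ∀ j ≤ k - 2, port a j ∈ S) ∧
      (∀ a < k, StrictMonoOn (port a) (Set.Iic (k - 2))) ∧
      (∀ a a', a < a' → a' < k → port a (k - 2) < port a' 0) ∧
      (∀ a < k, port a (k - 2) < m₀ ∨ m₀ < port a 0) := by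
  obtain ⟨s, hs_mono, hs_lt, hs_cut⟩ :=
    exists_block_starts (k - 1) (Nat.count (· ∈ S) m₀) (by omega)
  have hf : (Set.ofPred (· ∈ S)).Finite := S.finite_toSet
  have hS_eq : hf.toFinset = S := by ext; simp
  have hidx : ∀ a < k, ∀ j ≤ k - 2, s a + j < hf.toFinset.card := by
    intro a ha j hj
    have := hs_lt a
    have := Nat.mul_le_mul_right (k - 1) (show a + 1 ≤ k by omega)
    have : k * (k - 1) + k = k ^ 2 := by
      obtain ⟨K, rfl⟩ := Nat.exists_eq_add_of_le' (show 1 ≤ k by omega)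
      simp only [Nat.add_sub_cancel]
      ring
    rw [hS_eq]
    omega
  refine ⟨fun a j => Nat.nth (· ∈ S) (s a + j), fun a ha j hj => ?_,
    fun a ha j hj j' hj' hjj => ?_, fun a a' haa ha' => ?_, fun a ha => ?_⟩
  · exact Nat.nth_mem_of_lt_card hf (hidx a ha j hj)
  · exact Nat.nth_lt_nth_of_lt_card hf (by omega) (hidx a ha j' hj')
  · have := hs_mono a a' haa
    exact Nat.nth_lt_nth_of_lt_card hf (by omega) (hidx a' ha' 0 (by omega))
  rcases hs_cut a with h | h
  · exact .inl (Nat.nth_lt_of_lt_count (by omega))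
  · exact .inr (Nat.lt_nth_of_count_le hm₀ (hS_eq ▸ hidx a ha 0 (by omega)) (by omega))

namespace Multigraph

variable {G : Multigraph}

theorem Adj.ne {u v : G.V} (h : G.Adj u v) : u ≠ v := by
  rintro rfl
  obtain ⟨e, he⟩ := h
  exact G.no_loops e (he ▸ Sym2.mk_isDiag_iff.2 rfl)

namespace Walk

theorem exists_chain_append (X : ℕ → G.V) (e : ℕ → G.E) {p q : ℕ} (hpq : p ≤ q)
    (he : ∀ r, p ≤ r → r < q → G.ends (e r) = s(X r, X (r + 1))) {v : G.V}
    (W : G.Walk (X q) v) :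
    ∃ W' : G.Walk (X p) v, W'.support = (List.range' p (q - p)).map X ++ W.support ∧
      W'.edges = (List.range' p (q - p)).map e ++ W.edges := by
  induction hd : q - p generalizing p with
  | zero =>
    obtain rfl : p = q := by omega
    exact ⟨W, by simp⟩
  | succ d ih =>
    obtain ⟨W', hW'_supp, hW'_edges⟩ := ih (p := p + 1) (by omega)
      (fun r h1 h2 => he r (by omega) h2) (by omega)
    refine ⟨.cons (e p) (he p le_rfl (by omega)) W', ?_, ?_⟩ <;>
      simp [Walk.support, Walk.edges, List.range'_succ, hW'_supp, hW'_edges]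

theorem exists_support_eq_concat : ∀ {u v : G.V} (p : G.Walk u v), ∃ l, p.support = l ++ [v]
  | _, _, .nil _ => ⟨[], rfl⟩
  | u, _, .cons _ _ p => by
    obtain ⟨l, hl⟩ := p.exists_support_eq_concat
    exact ⟨u :: l, by simp [Walk.support, hl]⟩

theorem IsPath.ne_of_mem_internals {u v w : G.V} {p : G.Walk u v} (hp : p.IsPath)
    (hw : w ∈ p.internals) : w ∈ p.support ∧ w ≠ u ∧ w ≠ v := by
  cases p with
  | nil => simp [Walk.internals, Walk.support] at hw
  | cons _ _ p =>
    obtain ⟨l, hl⟩ := p.exists_support_eq_concat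
    simp only [Walk.internals, Walk.support, List.tail_cons, hl, List.dropLast_concat] at hw
    simp only [Walk.IsPath, Walk.support, hl, List.nodup_cons, List.nodup_append] at hp
    exact ⟨by simp [Walk.support, hl, hw], fun h => hp.1 (List.mem_append_left _ (h ▸ hw)),
      fun h => hp.2.2.2 w hw _ (.head _) h⟩

end Walk
end Multigraph

theorem cliqueGraph.exists_lt_ends {k : ℕ} (f : (cliqueGraph k).E) :
    ∃ a b : Fin k, a < b ∧ (cliqueGraph k).ends f = s(a, b) := by
  obtain ⟨z, hz⟩ := f
  induction z using Sym2.inductionOn with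
  | hf a b =>
    rcases lt_trichotomy a b with h | rfl | h
    · exact ⟨a, b, h, rfl⟩
    · exact absurd (Sym2.mk_isDiag_iff.2 rfl) hz
    · exact ⟨b, a, h, Sym2.eq_swap⟩

theorem strongImmersion_of_isEmpty {H G : Multigraph} [IsEmpty H.E] (π : H.V → G.V)
    (hπ : Function.Injective π) : StrongImmersion H G :=
  ⟨⟨π, hπ, isEmptyElim, isEmptyElim, isEmptyElim, isEmptyElim, isEmptyElim⟩, isEmptyElim⟩

namespace Multigraph

/-- Block `a < k` of the path `X 0, X 1, …, X (n - 1)` is its stretch between the ports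
`port a 0 < ⋯ < port a (k - 2)`, each joined to `hub` by an edge `spoke a j`; `par r t` for
`t < k` are distinct edges from `X r` to `X (r + 1)`. -/
structure HubbedPath (G : Multigraph) (k : ℕ) where
  n : ℕ
  X : ℕ → G.V
  hub : G.V
  port : ℕ → ℕ → ℕ
  par : ℕ → ℕ → G.E
  spoke : ℕ → ℕ → G.E
  injOn : Set.InjOn X (Set.Iio n)
  par_mapsTo : ∀ r, r + 1 < n →
    Set.MapsTo (par r) (Set.Iio k) {e | G.ends e = s(X r, X (r + 1))}
  par_injOn : ∀ r, r + 1 < n → Set.InjOn (par r) (Set.Iio k)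
  spoke_ends : ∀ a < k, ∀ j ≤ k - 2, G.ends (spoke a j) = s(hub, X (port a j))
  port_strictMonoOn : ∀ a < k, StrictMonoOn (port a) (Set.Iic (k - 2))
  port_lt_port_zero : ∀ a a', a < a' → a' < k → port a (k - 2) < port a' 0
  port_lt : ∀ a < k, port a (k - 2) < n
  X_ne_hub : ∀ a < k, ∀ r ∈ Set.Icc (port a 0) (port a (k - 2)), X r ≠ hub

namespace HubbedPath

variable {G : Multigraph} {k : ℕ} (F : HubbedPath G k)

def block (a : ℕ) : Set ℕ := Set.Icc (F.port a 0) (F.port a (k - 2))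

/-- `a - 1` truncates, so the branch vertex of block `0` is its first port. -/
def branch (a : ℕ) : G.V := F.X (F.port a (a - 1))

def run (a j j' : ℕ) : List ℕ := List.range' (F.port a j) (F.port a j' + 1 - F.port a j)

def pathVerts (a b : ℕ) : List G.V :=
  (F.run a (a - 1) (b - 1)).map F.X ++ F.hub :: (F.run b a (b - 1)).map F.X

def pathEdges (a b : ℕ) : List G.E :=
  (List.range' (F.port a (a - 1)) (F.port a (b - 1) - F.port a (a - 1))).map (F.par · b) ++
    F.spoke a (b - 1) :: F.spoke b a ::
      (List.range' (F.port b a) (F.port b (b - 1) - F.port b a)).map (F.par · a)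

variable {F} {a a' b c c' j j' r r' t t' : ℕ}

theorem port_le_port (ha : a < k) (hj : j ≤ j') (hj' : j' ≤ k - 2) :
    F.port a j ≤ F.port a j' :=
  (F.port_strictMonoOn a ha).monotoneOn (hj.trans hj') hj' hj

theorem port_mem_block (ha : a < k) (hj : j ≤ k - 2) : F.port a j ∈ F.block a :=
  ⟨port_le_port ha (Nat.zero_le j) hj, port_le_port ha hj le_rfl⟩

theorem eq_of_mem_block (ha : a < k) (ha' : a' < k) (h : r ∈ F.block a) (h' : r ∈ F.block a') :
    a = a' := by
  by_contra hne
  rcases Nat.lt_or_gt_of_ne hne with hlt | hlt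
  · exact (h.2.trans_lt ((F.port_lt_port_zero a a' hlt ha').trans_le h'.1)).false
  · exact (h'.2.trans_lt ((F.port_lt_port_zero a' a hlt ha).trans_le h.1)).false

theorem mem_block_of_mem_run (ha : a < k) (hj : j ≤ k - 2) (hj' : j' ≤ k - 2)
    (hr : r ∈ F.run a j j') : r ∈ F.block a := by
  rw [run, List.mem_range'_1] at hr
  exact ⟨(port_mem_block ha hj).1.trans hr.1, (show r ≤ F.port a j' by omega).trans
    (port_mem_block ha hj').2⟩

theorem mem_block_of_mem_Ico (hr : r ∈ Set.Ico (F.port a 0) (F.port a (k - 2))) :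
    r ∈ F.block a ∧ r + 1 ∈ F.block a :=
  ⟨Set.Ico_subset_Icc_self hr, hr.1.trans (Nat.le_succ r), hr.2⟩

theorem lt_of_mem_block (ha : a < k) (h : r ∈ F.block a) : r < F.n :=
  h.2.trans_lt (F.port_lt a ha)

theorem eq_of_X_eq (ha : a < k) (ha' : a' < k) (h : r ∈ F.block a) (h' : r' ∈ F.block a')
    (hX : F.X r = F.X r') : r = r' :=
  F.injOn (lt_of_mem_block ha h) (lt_of_mem_block ha' h') hX

theorem par_ends (ha : a < k) (ht : t < k) (hr : r < F.port a (k - 2)) :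
    G.ends (F.par r t) = s(F.X r, F.X (r + 1)) :=
  F.par_mapsTo r (by have := F.port_lt a ha; omega) ht

theorem exists_walk (hab : a < b) (hb : b < k) :
    ∃ W : G.Walk (F.branch a) (F.branch b), W.support = F.pathVerts a b ∧
      W.edges = F.pathEdges a b := by
  unfold branch
  have ha : a < k := hab.trans hb
  have hpa : F.port a (a - 1) ≤ F.port a (b - 1) := port_le_port ha (by omega) (by omega)
  have hpb : F.port b a ≤ F.port b (b - 1) := port_le_port hb (by omega) (by omega)
  obtain ⟨Wb, hWb_supp, hWb_edges⟩ := Walk.exists_chain_append F.X (F.par · a) hpb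
    (fun r _ hr => par_ends hb ha (hr.trans_le (port_le_port hb (by omega) le_rfl)))
    (.nil (F.X (F.port b (b - 1))))
  have h_out : G.ends (F.spoke a (b - 1)) = s(F.X (F.port a (b - 1)), F.hub) := by
    rw [F.spoke_ends a ha _ (by omega), Sym2.eq_swap]
  obtain ⟨Wa, hWa_supp, hWa_edges⟩ := Walk.exists_chain_append F.X (F.par · b) hpa
    (fun r _ hr => par_ends ha hb (hr.trans_le (port_le_port ha (by omega) le_rfl)))
    (.cons _ h_out (.cons _ (F.spoke_ends b hb a (by omega)) Wb))
  refine ⟨Wa, ?_, ?_⟩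
  · rw [hWa_supp, pathVerts, run, run, ← List.map_range'_append_cons _ hpa,
      ← List.append_nil (List.map F.X (List.range' (F.port b a) _)),
      ← List.map_range'_append_cons _ hpb]
    simp [Walk.support, hWb_supp]
  · simp [hWa_edges, Walk.edges, hWb_edges, pathEdges]

theorem pathVerts_nodup (hab : a < b) (hb : b < k) : (F.pathVerts a b).Nodup := by
  have ha : a < k := hab.trans hb
  have h₁ : ∀ r ∈ F.run a (a - 1) (b - 1), r ∈ F.block a :=
    fun r => mem_block_of_mem_run ha (by omega) (by omega)
  have h₂ : ∀ r ∈ F.run b a (b - 1), r ∈ F.block b :=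
    fun r => mem_block_of_mem_run hb (by omega) (by omega)
  have h_lt : ∀ r ∈ F.run a (a - 1) (b - 1) ++ F.run b a (b - 1), r < F.n := by
    simp only [List.mem_append]
    rintro r (hr | hr)
    exacts [lt_of_mem_block ha (h₁ r hr), lt_of_mem_block hb (h₂ r hr)]
  rw [pathVerts, List.nodup_middle, List.nodup_cons, ← List.map_append]
  refine ⟨?_, List.Nodup.map_on (fun r hr r' hr' => F.injOn (h_lt r hr) (h_lt r' hr'))
    (List.nodup_append.2 ⟨List.nodup_range', List.nodup_range', ?_⟩)⟩
  · simp only [List.mem_map, List.mem_append, not_exists, not_and]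
    rintro r (hr | hr)
    exacts [F.X_ne_hub a ha r (h₁ r hr), F.X_ne_hub b hb r (h₂ r hr)]
  · rintro r hr _ hr' rfl
    exact hab.ne (eq_of_mem_block ha hb (h₁ r hr) (h₂ r hr'))

theorem eq_or_eq_of_branch_mem_pathVerts (hab : a < b) (hb : b < k) (hc : c < k)
    (h : F.branch c ∈ F.pathVerts a b) : c = a ∨ c = b := by
  have ha : a < k := hab.trans hb
  have hc_mem : F.port c (c - 1) ∈ F.block c := port_mem_block hc (by omega)
  simp only [pathVerts, branch, List.mem_append, List.mem_cons, List.mem_map] at h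
  rcases h with ⟨r, hr, hX⟩ | hX | ⟨r, hr, hX⟩
  · have hr := mem_block_of_mem_run ha (by omega) (by omega) hr
    exact .inl (eq_of_mem_block hc ha hc_mem (eq_of_X_eq ha hc hr hc_mem hX ▸ hr))
  · exact absurd hX (F.X_ne_hub c hc _ hc_mem)
  · have hr := mem_block_of_mem_run hb (by omega) (by omega) hr
    exact .inr (eq_of_mem_block hc hb hc_mem (eq_of_X_eq hb hc hr hc_mem hX ▸ hr))

theorem branch_injOn : Set.InjOn F.branch (Set.Iio k) := by
  intro a (ha : a < k) a' (ha' : a' < k) h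
  have hmem : F.port a (a - 1) ∈ F.block a := port_mem_block ha (by omega)
  have hmem' : F.port a' (a' - 1) ∈ F.block a' := port_mem_block ha' (by omega)
  exact eq_of_mem_block ha ha' hmem (eq_of_X_eq ha ha' hmem hmem' h ▸ hmem')

theorem par_eq_par (hc : c < k) (hc' : c' < k) (hr : r ∈ Set.Ico (F.port c 0) (F.port c (k - 2)))
    (hr' : r' ∈ Set.Ico (F.port c' 0) (F.port c' (k - 2))) (ht : t < k) (ht' : t' < k)
    (h : F.par r t = F.par r' t') : r = r' ∧ t = t' := by
  have hends : s(F.X r, F.X (r + 1)) = s(F.X r', F.X (r' + 1)) := by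
    rw [← par_ends hc ht hr.2, ← par_ends hc' ht' hr'.2, h]
  obtain rfl : r = r' := by
    rcases Sym2.eq_iff.1 hends with ⟨h₁, -⟩ | ⟨h₁, h₂⟩
    · exact eq_of_X_eq hc hc' (mem_block_of_mem_Ico hr).1 (mem_block_of_mem_Ico hr').1 h₁
    · have := eq_of_X_eq hc hc' (mem_block_of_mem_Ico hr).1 (mem_block_of_mem_Ico hr').2 h₁
      have := eq_of_X_eq hc hc' (mem_block_of_mem_Ico hr).2 (mem_block_of_mem_Ico hr').1 h₂
      omega
  exact ⟨rfl, F.par_injOn r (by have := F.port_lt c hc; have := hr.2; omega) ht ht' h⟩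

theorem spoke_eq_spoke (hc : c < k) (hc' : c' < k) (hj : j ≤ k - 2) (hj' : j' ≤ k - 2)
    (h : F.spoke c j = F.spoke c' j') : c = c' ∧ j = j' := by
  have hmem := port_mem_block (F := F) hc hj
  have hmem' := port_mem_block (F := F) hc' hj'
  have hX : F.X (F.port c j) = F.X (F.port c' j') := by
    rw [← Sym2.congr_right, ← F.spoke_ends c hc j hj, ← F.spoke_ends c' hc' j' hj', h]
  have hport := eq_of_X_eq hc hc' hmem hmem' hX
  obtain rfl := eq_of_mem_block hc hc' hmem (hport ▸ hmem')
  exact ⟨rfl, (F.port_strictMonoOn c hc).injOn hj hj' hport⟩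

theorem par_ne_spoke (hc : c < k) (hr : r ∈ Set.Ico (F.port c 0) (F.port c (k - 2))) (ht : t < k)
    (hc' : c' < k) (hj : j ≤ k - 2) : F.par r t ≠ F.spoke c' j := by
  intro h
  have hub_mem : F.hub ∈ s(F.X r, F.X (r + 1)) := by
    rw [← par_ends hc ht hr.2, h, F.spoke_ends c' hc' j hj]
    exact Sym2.mem_mk_left _ _
  rcases Sym2.mem_iff.1 hub_mem with h | h
  exacts [F.X_ne_hub c hc r (mem_block_of_mem_Ico hr).1 h.symm,
    F.X_ne_hub c hc (r + 1) (mem_block_of_mem_Ico hr).2 h.symm]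

/-- The pair of blocks whose path may use `e`: copy `t` of a path edge in block `c` serves the
pair `{c, t}`, and spoke `j` of block `c` serves `{j, c}` if `j < c` and `{c, j + 1}` otherwise. -/
def AssignedTo (e : G.E) (z : Sym2 ℕ) : Prop :=
  (∃ c < k, ∃ r t, r ∈ Set.Ico (F.port c 0) (F.port c (k - 2)) ∧ t < k ∧ e = F.par r t ∧
    z = s(c, t)) ∨
  (∃ c < k, ∃ j ≤ k - 2, e = F.spoke c j ∧ z = s(c, if j < c then j else j + 1))

theorem AssignedTo.unique {e : G.E} {z z' : Sym2 ℕ} (h : F.AssignedTo e z)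
    (h' : F.AssignedTo e z') : z = z' := by
  rcases h with ⟨c, hc, r, t, hr, ht, rfl, rfl⟩ | ⟨c, hc, j, hj, rfl, rfl⟩ <;>
    rcases h' with ⟨c', hc', r', t', hr', ht', he, rfl⟩ | ⟨c', hc', j', hj', he, rfl⟩
  · obtain ⟨rfl, rfl⟩ := par_eq_par hc hc' hr hr' ht ht' he
    rw [eq_of_mem_block hc hc' (mem_block_of_mem_Ico hr).1 (mem_block_of_mem_Ico hr').1]
  · exact absurd he (par_ne_spoke hc hr ht hc' hj')
  · exact absurd he.symm (par_ne_spoke hc' hr' ht' hc hj)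
  · obtain ⟨rfl, rfl⟩ := spoke_eq_spoke hc hc' hj hj' he
    rfl

theorem assignedTo_of_mem_pathEdges (hab : a < b) (hb : b < k) {e : G.E}
    (he : e ∈ F.pathEdges a b) : F.AssignedTo e s(a, b) := by
  have ha : a < k := hab.trans hb
  simp only [pathEdges, List.mem_append, List.mem_cons, List.mem_map, List.mem_range'_1] at he
  rcases he with ⟨r, hr, rfl⟩ | rfl | rfl | ⟨r, hr, rfl⟩
  · have := port_le_port (F := F) (j := 0) (j' := a - 1) ha (by omega) (by omega)
    have := port_le_port (F := F) (j := b - 1) (j' := k - 2) ha (by omega) le_rfl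
    exact .inl ⟨a, ha, r, b, ⟨by omega, by omega⟩, hb, rfl, rfl⟩
  · refine .inr ⟨a, ha, b - 1, by omega, rfl, ?_⟩
    rw [if_neg (by omega), Nat.sub_add_cancel (by omega)]
  · exact .inr ⟨b, hb, a, by omega, rfl, by rw [if_pos hab, Sym2.eq_swap]⟩
  · have := port_le_port (F := F) (j := 0) (j' := a) hb (by omega) (by omega)
    have := port_le_port (F := F) (j := b - 1) (j' := k - 2) hb (by omega) le_rfl
    exact .inl ⟨b, hb, r, a, ⟨by omega, by omega⟩, ha, rfl, Sym2.eq_swap⟩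

theorem strongImmersion (F : HubbedPath G k) : StrongImmersion (cliqueGraph k) G := by
  choose lo hi hlt hends using cliqueGraph.exists_lt_ends (k := k)
  choose W hW_supp hW_edges using fun f => F.exists_walk (hlt f) (hi f).isLt
  have hW_path : ∀ f, (W f).IsPath := fun f => by
    rw [Walk.IsPath, hW_supp]
    exact F.pathVerts_nodup (hlt f) (hi f).isLt
  refine ⟨⟨fun v : Fin k => F.branch v, fun v v' h => Fin.ext (F.branch_injOn v.isLt v'.isLt h),
    fun f => (F.branch (lo f), F.branch (hi f)), W, fun f => by rw [hends f]; rfl, hW_path,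
    fun f f' hne e he he' => hne ?_⟩, fun f v hv => ?_⟩
  · rw [hW_edges] at he he'
    have hz := (F.assignedTo_of_mem_pathEdges (hlt f) (hi f).isLt he).unique
      (F.assignedTo_of_mem_pathEdges (hlt f') (hi f').isLt he')
    apply Subtype.ext
    change (cliqueGraph k).ends f = (cliqueGraph k).ends f'
    rw [hends, hends]
    exact Sym2.map.injective Fin.val_injective hz
  · obtain ⟨hmem, hne_lo, hne_hi⟩ := (hW_path f).ne_of_mem_internals hv
    rw [hW_supp] at hmem
    rcases F.eq_or_eq_of_branch_mem_pathVerts (hlt f) (hi f).isLt v.isLt hmem with h | h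
    exacts [hne_lo (congrArg F.branch h), hne_hi (congrArg F.branch h)]

theorem nonempty_of_adj {n : ℕ} (X : ℕ → G.V) (hub : G.V) (port : ℕ → ℕ → ℕ)
    (hk : 0 < k) (hX : Set.InjOn X (Set.Iio n))
    (hpar : ∀ r, r + 1 < n → k ≤ {e | G.ends e = s(X r, X (r + 1))}.ncard)
    (hadj : ∀ a < k, ∀ j ≤ k - 2, G.Adj hub (X (port a j)))
    (hmono : ∀ a < k, StrictMonoOn (port a) (Set.Iic (k - 2)))
    (hsep : ∀ a a', a < a' → a' < k → port a (k - 2) < port a' 0)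
    (hlt : ∀ a < k, port a (k - 2) < n)
    (hne : ∀ a < k, ∀ r ∈ Set.Icc (port a 0) (port a (k - 2)), X r ≠ hub) :
    Nonempty (HubbedPath G k) := by
  obtain ⟨e₀, -⟩ := hadj 0 hk 0 (Nat.zero_le _)
  have : Nonempty G.E := ⟨e₀⟩
  have h_par : ∀ r, ∃ f : ℕ → G.E, r + 1 < n →
      Set.MapsTo f (Set.Iio k) {e | G.ends e = s(X r, X (r + 1))} ∧ Set.InjOn f (Set.Iio k) := by
    intro r
    by_cases hr : r + 1 < n
    · obtain ⟨f, hf⟩ := exists_mapsTo_injOn_Iio_of_le_ncard (hpar r hr)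
      exact ⟨f, fun _ => hf⟩
    · exact ⟨fun _ => e₀, fun h => absurd h hr⟩
  have h_spoke : ∀ a j, ∃ e : G.E, a < k → j ≤ k - 2 →
      G.ends e = s(hub, X (port a j)) := by
    intro a j
    by_cases h : a < k ∧ j ≤ k - 2
    · obtain ⟨e, he⟩ := hadj a h.1 j h.2
      exact ⟨e, fun _ _ => he⟩
    · exact ⟨e₀, fun ha hj => absurd ⟨ha, hj⟩ h⟩
  choose par hpar_maps using h_par
  choose spoke hspoke using h_spoke
  exact ⟨{
    n := n
    X := X
    hub := hub
    port := port
    par := par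
    spoke := spoke
    injOn := hX
    par_mapsTo := fun r hr => (hpar_maps r hr).1
    par_injOn := fun r hr => (hpar_maps r hr).2
    spoke_ends := fun a ha j hj => hspoke a j ha hj
    port_strictMonoOn := hmono
    port_lt_port_zero := hsep
    port_lt := hlt
    X_ne_hub := hne }⟩

end HubbedPath
end Multigraph

theorem Multigraph.HubbedPath.nonempty_of_path (G : Multigraph) {n k : ℕ} (hk : 2 ≤ k)
    (x : Fin n → G.V) (hinj : Function.Injective x) (y : G.V)
    (hpar : ∀ i j : Fin n, (j : ℕ) = (i : ℕ) + 1 →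
      k ≤ ({e | G.ends e = s(x i, x j)} : Set G.E).ncard)
    (hnbrs : k ^ 2 ≤ ({i : Fin n | G.Adj y (x i)} : Set (Fin n)).ncard) :
    Nonempty (HubbedPath G k) := by
  classical
  set X : ℕ → G.V := fun m => if h : m < n then x ⟨m, h⟩ else y
  have hX : ∀ m (h : m < n), X m = x ⟨m, h⟩ := fun m h => dif_pos h
  have hX_inj : Set.InjOn X (Set.Iio n) := fun m hm m' hm' h => by
    rw [hX m hm, hX m' hm'] at h
    exact congrArg Fin.val (hinj h)
  set S : Finset ℕ := (Finset.univ.filter fun i : Fin n => G.Adj y (x i)).map Fin.valEmbedding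
  have hS : ∀ m ∈ S, m < n ∧ G.Adj y (X m) := by
    simp only [S, Finset.mem_map, Finset.mem_filter, Finset.mem_univ, true_and,
      Fin.valEmbedding_apply]
    rintro _ ⟨i, hi, rfl⟩
    exact ⟨i.isLt, by rwa [hX]⟩
  have hS_card : k ^ 2 ≤ S.card := by
    simpa [S, Set.ncard_eq_toFinset_card'] using hnbrs
  obtain ⟨m₀, hm₀S, hm₀⟩ : ∃ m₀, m₀ ∉ S ∧ ∀ m < n, X m = y → m = m₀ := by
    by_cases h : ∃ m < n, X m = y
    · obtain ⟨m₀, hm₀n, hm₀y⟩ := h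
      exact ⟨m₀, fun hm => (hS m₀ hm).2.ne hm₀y.symm,
        fun m hm hXm => hX_inj hm hm₀n (hXm.trans hm₀y.symm)⟩
    · push Not at h
      exact ⟨n, fun hn => lt_irrefl n (hS n hn).1, fun m hm hXm => absurd hXm (h m hm)⟩
  obtain ⟨port, hport_S, hport_mono, hport_sep, hport_cut⟩ := exists_ports hk S hS_card hm₀S
  have hport_lt : ∀ a < k, port a (k - 2) < n := fun a ha => (hS _ (hport_S a ha _ le_rfl)).1
  refine HubbedPath.nonempty_of_adj X y port (by omega) hX_inj (fun r hr => ?_)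
    (fun a ha j hj => (hS _ (hport_S a ha j hj)).2) hport_mono hport_sep hport_lt
    (fun a ha r ⟨h₀, h₁⟩ hXr => ?_)
  · rw [hX r (by omega), hX (r + 1) hr]
    exact hpar _ _ rfl
  · have := hm₀ r (h₁.trans_lt (hport_lt a ha)) hXr
    rcases hport_cut a ha with h | h <;> omega

/-- a path with `k` parallel edges between consecutive vertices plus a
vertex with `k²` neighbors on the path yields a strong immersion of `K_k`. -/
theorem strong_clique_immersion_of_path_plus_vertex (G : Multigraph) (n k : ℕ)
    (x : Fin n → G.V) (hinj : Function.Injective x) (y : G.V)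
    (hpar : ∀ i j : Fin n, (j : ℕ) = (i : ℕ) + 1 →
      k ≤ ({e | G.ends e = s(x i, x j)} : Set G.E).ncard)
    (hnbrs : k ^ 2 ≤ ({i : Fin n | G.Adj y (x i)} : Set (Fin n)).ncard) :
    StrongImmersion (cliqueGraph k) G := by
  rcases lt_or_ge k 2 with hk | hk
  · have : Subsingleton (Fin k) := Fin.subsingleton_iff_le_one.2 (by omega)
    have : IsEmpty (cliqueGraph k).E := ⟨fun f => f.2 (Sym2.isDiag_of_subsingleton _)⟩
    exact strongImmersion_of_isEmpty (fun _ => y) fun a b _ => Subsingleton.elim (α := Fin k) a b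
  · obtain ⟨F⟩ := HubbedPath.nonempty_of_path G hk x hinj y hpar hnbrs
    exact F.strongImmersion
end

section
/- Let G be a graph, X ⊆ V(G), and k ≥ 1. If there exists a partition U_1, …, U_m of V(G) \ X such that |δ(U_i)| < k for all i, then G contains no X-spider of order k. -/
open Multigraph

/-! The body of a spider lies in some part `U i`, which is disjoint from `X`; each of the `k`
legs must therefore leave `U i`, and edge-disjointness makes the edges of `δ(U i)` they leave
through pairwise distinct. -/

namespace Multigraph

variable {G : Multigraph}

theorem Walk.exists_mem_edges_mem_edgeBoundary {S : Set G.V} {u v : G.V} (p : G.Walk u v)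
    (hu : u ∈ S) (hv : v ∉ S) : ∃ e ∈ p.edges, e ∈ G.edgeBoundary S := by
  induction p with
  | nil => exact absurd hu hv
  | @cons a b _ e h p ih =>
    by_cases hb : b ∈ S
    · obtain ⟨e', he', hbd⟩ := ih hb hv
      exact ⟨e', List.mem_cons_of_mem _ he', hbd⟩
    · exact ⟨e, List.mem_cons_self, a, b, h, hu, hb⟩

theorem le_ncard_of_edgeDisjoint_walks {k : ℕ} {F : Set G.E} {s t : Fin k → G.V}
    (P : ∀ i, G.Walk (s i) (t i))
    (hdisj : ∀ i j, i ≠ j → ∀ e ∈ (P i).edges, e ∉ (P j).edges)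
    (hF : ∀ i, ∃ e ∈ (P i).edges, e ∈ F) : k ≤ F.ncard := by
  choose f hfP hfF using hF
  have hinj : Function.Injective f := fun i j hij ↦ by
    by_contra hne
    exact hdisj i j hne (f i) (hfP i) (hij ▸ hfP j)
  calc k = (Set.range f).ncard := by
        rw [← Nat.card_coe_set_eq, Nat.card_range_of_injective hinj, Nat.card_fin]
    _ ≤ F.ncard := Set.ncard_le_ncard (Set.range_subset_iff.mpr hfF) (Set.toFinite F)

theorem HasSpiderWithBody.le_ncard_edgeBoundary {X S : Set G.V} {k : ℕ} {v : G.V}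
    (h : G.HasSpiderWithBody X k v) (hv : v ∈ S) (hSX : Disjoint S X) :
    k ≤ (G.edgeBoundary S).ncard := by
  obtain ⟨-, tgt, P, htgt, -, -, hdisj⟩ := h
  exact le_ncard_of_edgeDisjoint_walks (s := fun _ ↦ v) P hdisj fun i ↦
    (P i).exists_mem_edges_mem_edgeBoundary hv (hSX.notMem_of_mem_right (htgt i))

end Multigraph

theorem no_spider_of_partition_general (G : Multigraph) (X : Set G.V) (k : ℕ)
    (m : ℕ) (U : Fin m → Set G.V)
    (hcover : (⋃ i, U i) = Set.univ \ X)
    (hsmall : ∀ i, (G.edgeBoundary (U i)).ncard < k) :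
    ¬ G.HasXSpider X k := by
  rintro ⟨v, hspider⟩
  obtain ⟨i, hvU⟩ : ∃ i, v ∈ U i := Set.mem_iUnion.mp (hcover ▸ ⟨trivial, hspider.1⟩)
  have hUX : Disjoint (U i) X := (Set.subset_sdiff.mp (hcover ▸ Set.subset_iUnion U i)).2
  exact (hsmall i).not_ge (hspider.le_ncard_edgeBoundary hvU hUX)

/-- a partition of `V(G) \ X` into parts with edge boundary of size less
than `k` precludes any `X`-spider of order `k`. -/
theorem no_spider_of_partition (G : Multigraph) (X : Set G.V) (k : ℕ) (hk : 1 ≤ k)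
    (m : ℕ) (U : Fin m → Set G.V)
    (hdisj : ∀ i j, i ≠ j → Disjoint (U i) (U j))
    (hcover : (⋃ i, U i) = Set.univ \ X)
    (hsmall : ∀ i, (G.edgeBoundary (U i)).ncard < k) :
    ¬ G.HasXSpider X k :=
  no_spider_of_partition_general G X k m U hcover hsmall
end

section
/- Let G be a graph containing a model of K_t as a minor with branch sets X_1, …, X_t, and let k be a positive integer with t ≥ (3/2)k. Then the set 𝒯 of separations (A,B) of G of order < k such that V(B) \ V(A) contains some branch set X_i is a tangle of order k in G. -/
open Multigraph

namespace CMTangle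

open Multigraph

variable {G : Multigraph}

lemma start_mem_support : ∀ {u v : G.V} (p : G.Walk u v), u ∈ p.support
  | _, _, .nil v => by simp [Walk.support]
  | _, _, .cons e h p => by simp [Walk.support]

lemma IsSepSymm {A B : G.Sub} (h : IsSeparation A B) : IsSeparation B A :=
  ⟨by rw [Set.union_comm]; exact h.1, by rw [Set.union_comm]; exact h.2.1,
   by rw [Set.inter_comm]; exact h.2.2⟩

lemma walk_side {A B : G.Sub} (hsep : IsSeparation A B) {Y : Set G.V}
    (hY : Y ∩ (A.verts ∩ B.verts) = ∅) :
    ∀ {u v : G.V} (p : G.Walk u v), (∀ w ∈ p.support, w ∈ Y) →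
      u ∈ A.verts → u ∉ B.verts → v ∈ A.verts ∧ v ∉ B.verts := by
  intro u v p
  induction p with
  | nil w => exact fun _ hA hB => ⟨hA, hB⟩
  | @cons u' v' w' e he p ih =>
    intro hsupp hA hB
    have hv'Y : v' ∈ Y := hsupp v' (by simp [Walk.support, start_mem_support p])
    have heA : e ∈ A.edgeSet := by
      have hu : e ∈ A.edgeSet ∪ B.edgeSet := by rw [hsep.2.1]; trivial
      rcases hu with h | h
      · exact h
      · exact absurd (B.closed e h u' (by rw [he]; exact Sym2.mem_mk_left _ _)) hB
    have hv'A : v' ∈ A.verts := A.closed e heA v' (by rw [he]; exact Sym2.mem_mk_right _ _)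
    have hv'B : v' ∉ B.verts := fun hb =>
      (Set.eq_empty_iff_forall_notMem.1 hY v') ⟨hv'Y, hv'A, hb⟩
    exact ih (fun w hw => hsupp w (by simp [Walk.support, hw])) hv'A hv'B

lemma branch_side {A B : G.Sub} (hsep : IsSeparation A B) {Y : Set G.V}
    (hne : Y.Nonempty)
    (hconn : ∀ u ∈ Y, ∀ v ∈ Y, ∃ p : G.Walk u v, ∀ w ∈ p.support, w ∈ Y)
    (hY : Y ∩ (A.verts ∩ B.verts) = ∅) :
    Y ⊆ A.verts \ B.verts ∨ Y ⊆ B.verts \ A.verts := by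
  obtain ⟨u, hu⟩ := hne
  have hu' : u ∈ A.verts ∪ B.verts := by rw [hsep.1]; trivial
  have hnot : ¬ (u ∈ A.verts ∧ u ∈ B.verts) := fun ⟨h1, h2⟩ =>
    (Set.eq_empty_iff_forall_notMem.1 hY u) ⟨hu, h1, h2⟩
  rcases hu' with h | h
  · left
    intro v hv
    obtain ⟨p, hp⟩ := hconn u hu v hv
    exact walk_side hsep hY p hp h (fun hb => hnot ⟨h, hb⟩)
  · right
    intro v hv
    obtain ⟨p, hp⟩ := hconn u hu v hv
    exact walk_side (IsSepSymm hsep) (by rwa [Set.inter_comm B.verts]) p hp h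
      (fun ha => hnot ⟨ha, h⟩)

lemma no_branch_small {t : ℕ} {X : Fin t → Set G.V} (hmodel : IsCliqueModel G t X)
    {A B : G.Sub} (hsep : IsSeparation A B) {i : Fin t}
    (hi : X i ⊆ B.verts \ A.verts) {m : Fin t} (hm : X m ⊆ A.verts \ B.verts) : False := by
  by_cases hmi : m = i
  · subst hmi
    obtain ⟨v, hv⟩ := hmodel.1 m
    exact (hm hv).2 (hi hv).1
  · obtain ⟨e, a, ha, b, hb, he⟩ := hmodel.2.2.2 m i hmi
    have hu : e ∈ A.edgeSet ∪ B.edgeSet := by rw [hsep.2.1]; trivial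
    rcases hu with h | h
    · exact (hi hb).2 (A.closed e h b (by rw [he]; exact Sym2.mem_mk_right _ _))
    · exact (hm ha).2 (B.closed e h a (by rw [he]; exact Sym2.mem_mk_left _ _))

lemma key {t : ℕ} {X : Fin t → Set G.V} (hmodel : IsCliqueModel G t X)
    {A₁ B₁ A₂ B₂ A₃ B₃ : G.Sub}
    (hs₁ : IsSeparation A₁ B₁) (hs₂ : IsSeparation A₂ B₂) (hs₃ : IsSeparation A₃ B₃)
    {i₁ i₂ i₃ : Fin t}
    (h₁ : X i₁ ⊆ B₁.verts \ A₁.verts) (h₂ : X i₂ ⊆ B₂.verts \ A₂.verts)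
    (h₃ : X i₃ ⊆ B₃.verts \ A₃.verts)
    (hV : ∀ v, v ∈ A₁.verts ∨ v ∈ A₂.verts ∨ v ∈ A₃.verts)
    (hE : ∀ e, e ∈ A₁.edgeSet ∨ e ∈ A₂.edgeSet ∨ e ∈ A₃.edgeSet)
    (m : Fin t) (hm₂ : X m ∩ (A₂.verts ∩ B₂.verts) = ∅)
    (hm₃ : X m ∩ (A₃.verts ∩ B₃.verts) = ∅) : False := by
  have hX2 : X m ⊆ B₂.verts \ A₂.verts := by
    rcases branch_side hs₂ (hmodel.1 m) (hmodel.2.2.1 m) hm₂ with h | h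
    · exact (no_branch_small hmodel hs₂ h₂ h).elim
    · exact h
  have hX3 : X m ⊆ B₃.verts \ A₃.verts := by
    rcases branch_side hs₃ (hmodel.1 m) (hmodel.2.2.1 m) hm₃ with h | h
    · exact (no_branch_small hmodel hs₃ h₃ h).elim
    · exact h
  have hXA1 : ∀ v ∈ X m, v ∈ A₁.verts := by
    intro v hv
    rcases hV v with h | h | h
    · exact h
    · exact absurd h (hX2 hv).2
    · exact absurd h (hX3 hv).2
  by_cases hmi : m = i₁
  · subst hmi
    obtain ⟨v, hv⟩ := hmodel.1 m
    exact (h₁ hv).2 (hXA1 v hv)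
  · obtain ⟨e, a, ha, b, hb, he⟩ := hmodel.2.2.2 m i₁ hmi
    rcases hE e with h | h | h
    · exact (h₁ hb).2 (A₁.closed e h b (by rw [he]; exact Sym2.mem_mk_right _ _))
    · exact (hX2 ha).2 (A₂.closed e h a (by rw [he]; exact Sym2.mem_mk_left _ _))
    · exact (hX3 ha).2 (A₃.closed e h a (by rw [he]; exact Sym2.mem_mk_left _ _))

lemma card_meet_le {t : ℕ} {X : Fin t → Set G.V}
    (hdisj : ∀ i j, i ≠ j → Disjoint (X i) (X j)) (S : Set G.V) :
    {m : Fin t | (X m ∩ S).Nonempty}.ncard ≤ S.ncard := by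
  classical
  rcases Set.eq_empty_or_nonempty {m : Fin t | (X m ∩ S).Nonempty} with h | h
  · simp [h]
  · obtain ⟨m₀, hm₀⟩ := h
    have hm₀' : (X m₀ ∩ S).Nonempty := hm₀
    haveI : Nonempty G.V := ⟨hm₀'.some⟩
    apply Set.ncard_le_ncard_of_injOn
      (fun m => if h : (X m ∩ S).Nonempty then h.some else Classical.arbitrary G.V)
    · intro m hm
      have hm' : (X m ∩ S).Nonempty := hm
      simp only [dif_pos hm']
      exact hm'.some_mem.2
    · intro m hm m' hm' heq
      have h1 : (X m ∩ S).Nonempty := hm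
      have h2 : (X m' ∩ S).Nonempty := hm'
      by_contra hne
      simp only [dif_pos h1, dif_pos h2] at heq
      exact (hdisj m m' hne).ne_of_mem h1.some_mem.1 h2.some_mem.1 heq

lemma two_mul_card_le {ι : Type} [Fintype ι] (N₁ N₂ N₃ : Set ι)
    (h : ∀ m, (m ∈ N₁ ∧ m ∈ N₂) ∨ (m ∈ N₁ ∧ m ∈ N₃) ∨ (m ∈ N₂ ∧ m ∈ N₃)) :
    2 * Fintype.card ι ≤ N₁.ncard + N₂.ncard + N₃.ncard := by
  classical
  have hcard : ∀ N : Set ι, N.ncard = ∑ m : ι, if m ∈ N then 1 else 0 := by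
    intro N
    rw [Set.ncard_eq_toFinset_card']
    rw [show N.toFinset = Finset.univ.filter (· ∈ N) by ext m; simp]
    exact Finset.card_filter _ _
  rw [hcard N₁, hcard N₂, hcard N₃, ← Finset.sum_add_distrib, ← Finset.sum_add_distrib]
  have : 2 * Fintype.card ι = ∑ _m : ι, 2 := by
    simp [Finset.sum_const, Finset.card_univ, Nat.mul_comm]
  rw [this]
  apply Finset.sum_le_sum
  intro m _
  rcases h m with ⟨h1, h2⟩ | ⟨h1, h2⟩ | ⟨h1, h2⟩ <;> simp [h1, h2] <;> split <;> omega

end CMTangle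

open Multigraph in
/-- a model of `K_t` with `t ≥ (3/2)k` induces a tangle of order `k`. -/
theorem cliqueModel_inducedTangle (G : Multigraph) (t k : ℕ) (hk : 1 ≤ k)
    (htk : 3 * k ≤ 2 * t) (X : Fin t → Set G.V) (hmodel : IsCliqueModel G t X) :
    IsTangle G {p : G.Sub × G.Sub | IsSeparation p.1 p.2 ∧ sepOrder p.1 p.2 < k ∧
      ∃ i, X i ⊆ p.2.verts \ p.1.verts} k := by
  classical
  refine ⟨?_, ?_, ?_, ?_⟩
  · rintro ⟨A, B⟩ ⟨hsep, hord, -⟩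
    exact ⟨hsep, hord⟩
  · intro A B hsep hord
    by_cases hall : ∀ m : Fin t, (X m ∩ (A.verts ∩ B.verts)).Nonempty
    · exfalso
      have h1 : {m : Fin t | (X m ∩ (A.verts ∩ B.verts)).Nonempty}.ncard
          ≤ (A.verts ∩ B.verts).ncard := CMTangle.card_meet_le hmodel.2.1 _
      have h2 : {m : Fin t | (X m ∩ (A.verts ∩ B.verts)).Nonempty} = Set.univ :=
        Set.eq_univ_of_forall hall
      rw [h2] at h1
      have h3 : (Set.univ : Set (Fin t)).ncard = t := by
        simp [Set.ncard_univ]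
      have h4 : (A.verts ∩ B.verts).ncard < k := hord
      omega
    · push_neg at hall
      obtain ⟨m, hm⟩ := hall
      rcases CMTangle.branch_side hsep (hmodel.1 m) (hmodel.2.2.1 m) hm with h | h
      · right
        refine ⟨CMTangle.IsSepSymm hsep, ?_, m, h⟩
        show (B.verts ∩ A.verts).ncard < k
        rw [Set.inter_comm]
        exact hord
      · left
        exact ⟨hsep, hord, m, h⟩
  · rintro ⟨A₁, B₁⟩ ⟨hs₁, ho₁, i₁, hi₁⟩ ⟨A₂, B₂⟩ ⟨hs₂, ho₂, i₂, hi₂⟩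
      ⟨A₃, B₃⟩ ⟨hs₃, ho₃, i₃, hi₃⟩ ⟨hVu, hEu⟩
    simp only at hs₁ ho₁ hi₁ hs₂ ho₂ hi₂ hs₃ ho₃ hi₃ hVu hEu
    have hV : ∀ v, v ∈ A₁.verts ∨ v ∈ A₂.verts ∨ v ∈ A₃.verts := by
      intro v
      have hv : v ∈ A₁.verts ∪ A₂.verts ∪ A₃.verts := by rw [hVu]; trivial
      rcases hv with (h | h) | h
      · exact Or.inl h
      · exact Or.inr (Or.inl h)
      · exact Or.inr (Or.inr h)
    have hE : ∀ e, e ∈ A₁.edgeSet ∨ e ∈ A₂.edgeSet ∨ e ∈ A₃.edgeSet := by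
      intro e
      have he : e ∈ A₁.edgeSet ∪ A₂.edgeSet ∪ A₃.edgeSet := by rw [hEu]; trivial
      rcases he with (h | h) | h
      · exact Or.inl h
      · exact Or.inr (Or.inl h)
      · exact Or.inr (Or.inr h)
    set S₁ := A₁.verts ∩ B₁.verts with hS₁
    set S₂ := A₂.verts ∩ B₂.verts with hS₂
    set S₃ := A₃.verts ∩ B₃.verts with hS₃
    have hkey : ∀ m : Fin t,
        (m ∈ {m : Fin t | (X m ∩ S₁).Nonempty} ∧ m ∈ {m : Fin t | (X m ∩ S₂).Nonempty}) ∨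
        (m ∈ {m : Fin t | (X m ∩ S₁).Nonempty} ∧ m ∈ {m : Fin t | (X m ∩ S₃).Nonempty}) ∨
        (m ∈ {m : Fin t | (X m ∩ S₂).Nonempty} ∧ m ∈ {m : Fin t | (X m ∩ S₃).Nonempty}) := by
      intro m
      have h23 : (X m ∩ S₂).Nonempty ∨ (X m ∩ S₃).Nonempty := by
        by_contra h
        push_neg at h
        exact CMTangle.key hmodel hs₁ hs₂ hs₃ hi₁ hi₂ hi₃ hV hE m h.1 h.2
      have h13 : (X m ∩ S₁).Nonempty ∨ (X m ∩ S₃).Nonempty := by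
        by_contra h
        push_neg at h
        exact CMTangle.key hmodel hs₂ hs₁ hs₃ hi₂ hi₁ hi₃
          (fun v => by have := hV v; tauto) (fun e => by have := hE e; tauto) m h.1 h.2
      have h12 : (X m ∩ S₁).Nonempty ∨ (X m ∩ S₂).Nonempty := by
        by_contra h
        push_neg at h
        exact CMTangle.key hmodel hs₃ hs₁ hs₂ hi₃ hi₁ hi₂
          (fun v => by have := hV v; tauto) (fun e => by have := hE e; tauto) m h.1 h.2
      simp only [Set.mem_setOf_eq]
      tauto
    have hc := CMTangle.two_mul_card_le _ _ _ hkey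
    have c1 : {m : Fin t | (X m ∩ S₁).Nonempty}.ncard ≤ S₁.ncard :=
      CMTangle.card_meet_le hmodel.2.1 S₁
    have c2 : {m : Fin t | (X m ∩ S₂).Nonempty}.ncard ≤ S₂.ncard :=
      CMTangle.card_meet_le hmodel.2.1 S₂
    have c3 : {m : Fin t | (X m ∩ S₃).Nonempty}.ncard ≤ S₃.ncard :=
      CMTangle.card_meet_le hmodel.2.1 S₃
    have hcard : Fintype.card (Fin t) = t := Fintype.card_fin t
    have e1 : S₁.ncard < k := ho₁
    have e2 : S₂.ncard < k := ho₂
    have e3 : S₃.ncard < k := ho₃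
    omega
  · rintro ⟨A, B⟩ ⟨-, -, i, hi⟩ h
    obtain ⟨v, hv⟩ := hmodel.1 i
    exact (hi hv).2 (h ▸ trivial)
end
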